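/- arXiv:0901.1793 — 8 statements merged into one kernel-verified Lean document; each statement's English description precedes it below -/
import Mathlib

section
/- Let G₁, G₂ be groups with irredundant covers C₁ = {M₁,…,M_m} and C₂ = {N₁,…,N_n} by proper subgroups, where M₁ ⊴ G₁ and N₁ ⊴ G₂ are normal, and suppose a ∈ G₁ \ M₁ and b ∈ G₂ \ N₁ are such that the cosets M₁a and N₁b have the same prime order p in the quotients. Then the collection C = {(M₁ × N₁)⟨(a,b)⟩} ∪ {M_i × G₂ : 2 ≤ i ≤ m} ∪ {G₁ × N_j : 2 ≤ j ≤ n} is a cover of G₁ × G₂ by proper subgroups, i.e., every element of G₁ × G₂ lies in some member of C and every member is a proper subgroup. -/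
/-- The collection C is a cover of G₁ × G₂ by proper subgroups. -/
theorem stmt4 {G₁ G₂ : Type*} [Group G₁] [Group G₂] {m n : ℕ}
    (M : Fin (m + 1) → Subgroup G₁) (N : Fin (n + 1) → Subgroup G₂)
    (hMproper : ∀ i, M i ≠ ⊤) (hNproper : ∀ j, N j ≠ ⊤)
    (hMcover : ∀ g : G₁, ∃ i, g ∈ M i) (hNcover : ∀ g : G₂, ∃ j, g ∈ N j)
    (hMirr : ∀ s : Finset (Fin (m + 1)), s ≠ Finset.univ → ¬ (∀ g : G₁, ∃ i ∈ s, g ∈ M i))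
    (hNirr : ∀ s : Finset (Fin (n + 1)), s ≠ Finset.univ → ¬ (∀ g : G₂, ∃ j ∈ s, g ∈ N j))
    [hM0 : (M 0).Normal] [hN0 : (N 0).Normal]
    (p : ℕ) (hp : p.Prime) (a : G₁) (b : G₂) (ha : a ∉ M 0) (hb : b ∉ N 0)
    (horda : orderOf (QuotientGroup.mk a : G₁ ⧸ M 0) = p)
    (hordb : orderOf (QuotientGroup.mk b : G₂ ⧸ N 0) = p)
    (C : Set (Subgroup (G₁ × G₂)))
    (hC : C = insert ((M 0).prod (N 0) ⊔ Subgroup.zpowers (a, b))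
      ({S | ∃ i, i ≠ 0 ∧ S = (M i).prod ⊤} ∪ {S | ∃ j, j ≠ 0 ∧ S = (⊤ : Subgroup G₁).prod (N j)})) :
    (∀ g : G₁ × G₂, ∃ S ∈ C, g ∈ S) ∧ (∀ S ∈ C, S ≠ ⊤) := by
  subst hC
  constructor
  · rintro ⟨g, h⟩
    by_cases hg : ∃ i, i ≠ 0 ∧ g ∈ M i
    · obtain ⟨i, hi, hgi⟩ := hg
      exact ⟨(M i).prod ⊤, Set.mem_insert_of_mem _ (Or.inl ⟨i, hi, rfl⟩),
        Subgroup.mem_prod.2 ⟨hgi, trivial⟩⟩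
    · by_cases hh : ∃ j, j ≠ 0 ∧ h ∈ N j
      · obtain ⟨j, hj, hhj⟩ := hh
        exact ⟨(⊤ : Subgroup G₁).prod (N j), Set.mem_insert_of_mem _ (Or.inr ⟨j, hj, rfl⟩),
          Subgroup.mem_prod.2 ⟨trivial, hhj⟩⟩
      · push_neg at hg hh
        obtain ⟨i, hgi⟩ := hMcover g
        obtain ⟨j, hhj⟩ := hNcover h
        have hg0 : g ∈ M 0 := by
          rcases eq_or_ne i 0 with rfl | hi
          · exact hgi
          · exact absurd hgi (hg i hi)
        have hh0 : h ∈ N 0 := by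
          rcases eq_or_ne j 0 with rfl | hj
          · exact hhj
          · exact absurd hhj (hh j hj)
        exact ⟨_, Set.mem_insert _ _,
          Subgroup.mem_sup_left (Subgroup.mem_prod.2 ⟨hg0, hh0⟩)⟩
  · intro S hS
    rcases hS with rfl | ⟨i, hi, rfl⟩ | ⟨j, hj, rfl⟩
    · intro htop
      set f := (QuotientGroup.mk' (M 0)).prodMap (QuotientGroup.mk' (N 0)) with hf
      have hsurj : Function.Surjective f :=
        (QuotientGroup.mk'_surjective _).prodMap (QuotientGroup.mk'_surjective _)
      have hmap : Subgroup.map f ((M 0).prod (N 0) ⊔ Subgroup.zpowers (a, b)) = ⊤ := by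
        rw [htop, Subgroup.map_top_of_surjective _ hsurj]
      rw [Subgroup.map_sup] at hmap
      have h1 : Subgroup.map f ((M 0).prod (N 0)) = ⊥ := by
        rw [eq_bot_iff]
        rintro x hx
        obtain ⟨⟨y1, y2⟩, ⟨hy1, hy2⟩, rfl⟩ := hx
        simp only [Subgroup.mem_bot, hf, MonoidHom.prodMap, MonoidHom.prod_apply,
          MonoidHom.comp_apply, Prod.ext_iff]
        constructor
        · simpa [QuotientGroup.eq_one_iff] using hy1
        · simpa [QuotientGroup.eq_one_iff] using hy2
      rw [h1, bot_sup_eq, MonoidHom.map_zpowers] at hmap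
      have hmem : ((QuotientGroup.mk a : G₁ ⧸ M 0), (1 : G₂ ⧸ N 0)) ∈
          Subgroup.zpowers (f (a, b)) := by
        rw [hmap]; trivial
      obtain ⟨k, hk⟩ := hmem
      have hfa : f (a, b) = ((QuotientGroup.mk a : G₁ ⧸ M 0),
          (QuotientGroup.mk b : G₂ ⧸ N 0)) := rfl
      simp only at hk
      have hk1 : (QuotientGroup.mk a : G₁ ⧸ M 0) ^ k = QuotientGroup.mk a :=
        congrArg Prod.fst hk
      have hk2 : (QuotientGroup.mk b : G₂ ⧸ N 0) ^ k = 1 :=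
        congrArg Prod.snd hk
      have hpk : (p : ℤ) ∣ k := by
        rw [← hordb]
        exact orderOf_dvd_iff_zpow_eq_one.2 hk2
      have hpk1 : (p : ℤ) ∣ (k - 1) := by
        rw [← horda]
        refine orderOf_dvd_iff_zpow_eq_one.2 ?_
        rw [zpow_sub, hk1, zpow_one, mul_inv_cancel]
      have hone : (p : ℤ) ∣ 1 := by
        have := dvd_sub hpk hpk1
        simpa using this
      have := Int.le_of_dvd one_pos hone
      have := hp.one_lt
      omega
    · intro htop
      apply hMproper i
      rw [eq_top_iff]
      intro g _
      have : ((g, 1) : G₁ × G₂) ∈ (M i).prod ⊤ := by rw [htop]; trivial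
      exact this.1
    · intro htop
      apply hNproper j
      rw [eq_top_iff]
      intro h _
      have : ((1, h) : G₁ × G₂) ∈ (⊤ : Subgroup G₁).prod (N j) := by rw [htop]; trivial
      exact this.2
end

section
/- Under the hypotheses of Theorem 1 (irredundant covers C₁ = {M₁,…,M_m} of G₁ and C₂ = {N₁,…,N_n} of G₂, with M₁, N₁ normal and a ∈ G₁\M₁, b ∈ G₂\N₁ such that M₁a and N₁b have the same prime order p), the cover C = {(M₁ × N₁)⟨(a,b)⟩, M_i × G₂ (i≥2), G₁ × N_j (j≥2)} of G₁ × G₂ is irredundant: no proper subcollection of C covers G₁ × G₂. -/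
/-- Membership in `(M.prod N) ⊔ zpowers (a, b)` forces the quotient images to be
a common power of the images of `a` and `b`. -/
lemma memH_aux {G₁ G₂ : Type*} [Group G₁] [Group G₂]
    {M : Subgroup G₁} {N : Subgroup G₂} [M.Normal] [N.Normal]
    {a x : G₁} {b y : G₂}
    (h : (x, y) ∈ M.prod N ⊔ Subgroup.zpowers (a, b)) :
    ∃ k : ℤ, (QuotientGroup.mk x : G₁ ⧸ M) = (QuotientGroup.mk a : G₁ ⧸ M) ^ k ∧
      (QuotientGroup.mk y : G₂ ⧸ N) = (QuotientGroup.mk b : G₂ ⧸ N) ^ k := by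
  let f : G₁ × G₂ →* (G₁ ⧸ M) × (G₂ ⧸ N) :=
    (QuotientGroup.mk' M).prodMap (QuotientGroup.mk' N)
  have hle : M.prod N ⊔ Subgroup.zpowers (a, b) ≤
      (Subgroup.zpowers (f (a, b))).comap f := by
    refine sup_le ?_ ?_
    · rintro ⟨u, v⟩ ⟨hu, hv⟩
      have h1 : f (u, v) = 1 := by
        have he : f (u, v) = (QuotientGroup.mk u, QuotientGroup.mk v) := rfl
        rw [he, Prod.mk_eq_one]
        exact ⟨(QuotientGroup.eq_one_iff u).mpr hu, (QuotientGroup.eq_one_iff v).mpr hv⟩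
      rw [Subgroup.mem_comap, h1]
      exact one_mem _
    · rintro w ⟨k, rfl⟩
      rw [Subgroup.mem_comap, map_zpow]
      exact zpow_mem (Subgroup.mem_zpowers _) k
  obtain ⟨k, hk⟩ := hle h
  have he : (f (a, b)) ^ k = ((QuotientGroup.mk a : G₁ ⧸ M) ^ k, (QuotientGroup.mk b : G₂ ⧸ N) ^ k) := rfl
  have he2 : f (x, y) = (QuotientGroup.mk x, QuotientGroup.mk y) := rfl
  have hk' : f (a, b) ^ k = f (x, y) := hk
  rw [he, he2, Prod.mk.injEq] at hk'
  exact ⟨k, hk'.1.symm, hk'.2.symm⟩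

/-- The cover C of G₁ × G₂ is irredundant: no proper subcollection covers. -/
theorem stmt5 {G₁ G₂ : Type*} [Group G₁] [Group G₂] {m n : ℕ}
    (M : Fin (m + 1) → Subgroup G₁) (N : Fin (n + 1) → Subgroup G₂)
    (hMproper : ∀ i, M i ≠ ⊤) (hNproper : ∀ j, N j ≠ ⊤)
    (hMcover : ∀ g : G₁, ∃ i, g ∈ M i) (hNcover : ∀ g : G₂, ∃ j, g ∈ N j)
    (hMirr : ∀ s : Finset (Fin (m + 1)), s ≠ Finset.univ → ¬ (∀ g : G₁, ∃ i ∈ s, g ∈ M i))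
    (hNirr : ∀ s : Finset (Fin (n + 1)), s ≠ Finset.univ → ¬ (∀ g : G₂, ∃ j ∈ s, g ∈ N j))
    [hM0 : (M 0).Normal] [hN0 : (N 0).Normal]
    (p : ℕ) (hp : p.Prime) (a : G₁) (b : G₂) (ha : a ∉ M 0) (hb : b ∉ N 0)
    (horda : orderOf (QuotientGroup.mk a : G₁ ⧸ M 0) = p)
    (hordb : orderOf (QuotientGroup.mk b : G₂ ⧸ N 0) = p)
    (C : Set (Subgroup (G₁ × G₂)))
    (hC : C = insert ((M 0).prod (N 0) ⊔ Subgroup.zpowers (a, b))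
      ({S | ∃ i, i ≠ 0 ∧ S = (M i).prod ⊤} ∪ {S | ∃ j, j ≠ 0 ∧ S = (⊤ : Subgroup G₁).prod (N j)})) :
    ∀ D : Set (Subgroup (G₁ × G₂)), D ⊂ C → ¬ (∀ g : G₁ × G₂, ∃ S ∈ D, g ∈ S) := by
  intro D hD hcov
  have hDsub : D ⊆ C := hD.1
  -- element of C missing from D
  obtain ⟨S, hSC, hSD⟩ : ∃ S ∈ C, S ∉ D := Set.exists_of_ssubset hD
  -- picking a point covered only by M i
  have pickM : ∀ i : Fin (m + 1), ∃ x, x ∈ M i ∧ ∀ i', i' ≠ i → x ∉ M i' := by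
    intro i
    have hne : (Finset.univ.erase i) ≠ Finset.univ := by
      intro h
      have := Finset.mem_univ i
      rw [← h] at this
      exact (Finset.mem_erase.mp this).1 rfl
    have := hMirr _ hne
    push_neg at this
    obtain ⟨x, hx⟩ := this
    have hxmem : x ∈ M i := by
      obtain ⟨i', hi'⟩ := hMcover x
      by_cases h : i' = i
      · exact h ▸ hi'
      · exact absurd hi' (hx i' (Finset.mem_erase.mpr ⟨h, Finset.mem_univ _⟩))
    exact ⟨x, hxmem, fun i' h => hx i' (Finset.mem_erase.mpr ⟨h, Finset.mem_univ _⟩)⟩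
  have pickN : ∀ j : Fin (n + 1), ∃ y, y ∈ N j ∧ ∀ j', j' ≠ j → y ∉ N j' := by
    intro j
    have hne : (Finset.univ.erase j) ≠ Finset.univ := by
      intro h
      have := Finset.mem_univ j
      rw [← h] at this
      exact (Finset.mem_erase.mp this).1 rfl
    have := hNirr _ hne
    push_neg at this
    obtain ⟨y, hy⟩ := this
    have hymem : y ∈ N j := by
      obtain ⟨j', hj'⟩ := hNcover y
      by_cases h : j' = j
      · exact h ▸ hj'
      · exact absurd hj' (hy j' (Finset.mem_erase.mpr ⟨h, Finset.mem_univ _⟩))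
    exact ⟨y, hymem, fun j' h => hy j' (Finset.mem_erase.mpr ⟨h, Finset.mem_univ _⟩)⟩
  -- classification of members of C
  have hmemC : ∀ T ∈ C, T = (M 0).prod (N 0) ⊔ Subgroup.zpowers (a, b) ∨
      (∃ i, i ≠ 0 ∧ T = (M i).prod ⊤) ∨ (∃ j, j ≠ 0 ∧ T = (⊤ : Subgroup G₁).prod (N j)) := by
    intro T hT
    rw [hC] at hT
    rcases hT with h | h
    · exact Or.inl h
    · rcases h with h | h
      · exact Or.inr (Or.inl h)
      · exact Or.inr (Or.inr h)
  -- zpow facts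
  have hzpa : ∀ k : ℤ, ((p : ℤ) ∣ k) → (QuotientGroup.mk a : G₁ ⧸ M 0) ^ k = 1 := by
    intro k hk
    obtain ⟨t, rfl⟩ := hk
    rw [zpow_mul, zpow_natCast, ← horda, pow_orderOf_eq_one, one_zpow]
  have hzpb : ∀ k : ℤ, ((p : ℤ) ∣ k) → (QuotientGroup.mk b : G₂ ⧸ N 0) ^ k = 1 := by
    intro k hk
    obtain ⟨t, rfl⟩ := hk
    rw [zpow_mul, zpow_natCast, ← hordb, pow_orderOf_eq_one, one_zpow]
  rcases hmemC S hSC with rfl | ⟨i, hi, rfl⟩ | ⟨j, hj, rfl⟩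
  · -- missing subgroup is H₀
    obtain ⟨x, hx0, hx⟩ := pickM 0
    obtain ⟨y, hy0, hy⟩ := pickN 0
    obtain ⟨T, hTD, hT⟩ := hcov (x, y)
    rcases hmemC T (hDsub hTD) with rfl | ⟨i, hi, rfl⟩ | ⟨j, hj, rfl⟩
    · exact hSD hTD
    · exact hx i hi ((Subgroup.mem_prod.mp hT).1)
    · exact hy j hj ((Subgroup.mem_prod.mp hT).2)
  · -- missing subgroup is M i × ⊤, i ≠ 0
    obtain ⟨x, hxi, hx⟩ := pickM i
    obtain ⟨y, hy0, hy⟩ := pickN 0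
    obtain ⟨T, hTD, hT⟩ := hcov (x, y)
    rcases hmemC T (hDsub hTD) with rfl | ⟨i', hi', rfl⟩ | ⟨j, hj, rfl⟩
    · -- (x,y) ∈ H₀ is impossible
      obtain ⟨k, hk1, hk2⟩ := memH_aux hT
      have hyone : (QuotientGroup.mk y : G₂ ⧸ N 0) = 1 := (QuotientGroup.eq_one_iff y).mpr hy0
      have hdvd : (p : ℤ) ∣ k := by
        rw [← hordb]
        exact (orderOf_dvd_iff_zpow_eq_one).mpr (hk2.symm.trans hyone)
      have hxone : (QuotientGroup.mk x : G₁ ⧸ M 0) = 1 := hk1.trans (hzpa k hdvd)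
      exact hx 0 (Ne.symm hi) ((QuotientGroup.eq_one_iff x).mp hxone)
    · by_cases h : i' = i
      · subst h; exact hSD hTD
      · exact hx i' h ((Subgroup.mem_prod.mp hT).1)
    · exact hy j hj ((Subgroup.mem_prod.mp hT).2)
  · -- missing subgroup is ⊤ × N j, j ≠ 0
    obtain ⟨x, hx0, hx⟩ := pickM 0
    obtain ⟨y, hyj, hy⟩ := pickN j
    obtain ⟨T, hTD, hT⟩ := hcov (x, y)
    rcases hmemC T (hDsub hTD) with rfl | ⟨i, hi, rfl⟩ | ⟨j', hj', rfl⟩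
    · obtain ⟨k, hk1, hk2⟩ := memH_aux hT
      have hxone : (QuotientGroup.mk x : G₁ ⧸ M 0) = 1 := (QuotientGroup.eq_one_iff x).mpr hx0
      have hdvd : (p : ℤ) ∣ k := by
        rw [← horda]
        exact (orderOf_dvd_iff_zpow_eq_one).mpr (hk1.symm.trans hxone)
      have hyone : (QuotientGroup.mk y : G₂ ⧸ N 0) = 1 := hk2.trans (hzpb k hdvd)
      exact hy 0 (Ne.symm hj) ((QuotientGroup.eq_one_iff y).mp hyone)
    · exact hx i hi ((Subgroup.mem_prod.mp hT).1)
    · by_cases h : j' = j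
      · subst h; exact hSD hTD
      · exact hy j' h ((Subgroup.mem_prod.mp hT).2)
end

section
/- Under the hypotheses of Theorem 1, the intersection of all members of the cover C = {(M₁ × N₁)⟨(a,b)⟩, M_i × G₂ (i≥2), G₁ × N_j (j≥2)} of G₁ × G₂ equals D₁ × D₂, where D₁ = ⋂_{i=1}^m M_i and D₂ = ⋂_{j=1}^n N_j. -/
lemma key_mem_zero {G : Type*} [Group G] {m : ℕ} (M : Fin (m + 1) → Subgroup G)
    (hcover : ∀ g : G, ∃ i, g ∈ M i)
    (hirr : ∀ s : Finset (Fin (m + 1)), s ≠ Finset.univ → ¬ (∀ g : G, ∃ i ∈ s, g ∈ M i))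
    {x : G} (hx : ∀ i, i ≠ 0 → x ∈ M i) : x ∈ M 0 := by
  have hs : (Finset.univ.erase (0 : Fin (m + 1))) ≠ Finset.univ := by
    intro h
    have := Finset.notMem_erase (0 : Fin (m + 1)) Finset.univ
    rw [h] at this
    exact this (Finset.mem_univ 0)
  have := hirr _ hs
  push_neg at this
  obtain ⟨g, hg⟩ := this
  have hg' : ∀ i, i ≠ 0 → g ∉ M i := fun i hi =>
    hg i (Finset.mem_erase.mpr ⟨hi, Finset.mem_univ i⟩)
  have hg0 : g ∈ M 0 := by
    obtain ⟨i, hi⟩ := hcover g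
    rcases eq_or_ne i 0 with h | h
    · exact h ▸ hi
    · exact absurd hi (hg' i h)
  obtain ⟨i, hi⟩ := hcover (g * x)
  rcases eq_or_ne i 0 with h | h
  · subst h
    have := (M 0).mul_mem ((M 0).inv_mem hg0) hi
    simpa using this
  · exfalso
    have : g ∈ M i := by
      have := (M i).mul_mem hi ((M i).inv_mem (hx i h))
      simpa using this
    exact hg' i h this

/-- The intersection of all members of the cover C equals D₁ × D₂. -/
theorem stmt6 {G₁ G₂ : Type*} [Group G₁] [Group G₂] {m n : ℕ}
    (M : Fin (m + 1) → Subgroup G₁) (N : Fin (n + 1) → Subgroup G₂)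
    (hMproper : ∀ i, M i ≠ ⊤) (hNproper : ∀ j, N j ≠ ⊤)
    (hMcover : ∀ g : G₁, ∃ i, g ∈ M i) (hNcover : ∀ g : G₂, ∃ j, g ∈ N j)
    (hMirr : ∀ s : Finset (Fin (m + 1)), s ≠ Finset.univ → ¬ (∀ g : G₁, ∃ i ∈ s, g ∈ M i))
    (hNirr : ∀ s : Finset (Fin (n + 1)), s ≠ Finset.univ → ¬ (∀ g : G₂, ∃ j ∈ s, g ∈ N j))
    [hM0 : (M 0).Normal] [hN0 : (N 0).Normal]
    (p : ℕ) (hp : p.Prime) (a : G₁) (b : G₂) (ha : a ∉ M 0) (hb : b ∉ N 0)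
    (horda : orderOf (QuotientGroup.mk a : G₁ ⧸ M 0) = p)
    (hordb : orderOf (QuotientGroup.mk b : G₂ ⧸ N 0) = p)
    (C : Set (Subgroup (G₁ × G₂)))
    (hC : C = insert ((M 0).prod (N 0) ⊔ Subgroup.zpowers (a, b))
      ({S | ∃ i, i ≠ 0 ∧ S = (M i).prod ⊤} ∪ {S | ∃ j, j ≠ 0 ∧ S = (⊤ : Subgroup G₁).prod (N j)})) :
    sInf C = (⨅ i, M i).prod (⨅ j, N j) := by
  subst hC
  apply le_antisymm
  · intro g hg
    rw [Subgroup.mem_sInf] at hg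
    have hM' : ∀ i, i ≠ 0 → g.1 ∈ M i := by
      intro i hi
      have := hg ((M i).prod ⊤) (Set.mem_insert_of_mem _ (Or.inl ⟨i, hi, rfl⟩))
      exact this.1
    have hN' : ∀ j, j ≠ 0 → g.2 ∈ N j := by
      intro j hj
      have := hg ((⊤ : Subgroup G₁).prod (N j)) (Set.mem_insert_of_mem _ (Or.inr ⟨j, hj, rfl⟩))
      exact this.2
    have hM0' : g.1 ∈ M 0 := key_mem_zero M hMcover hMirr hM'
    have hN0' : g.2 ∈ N 0 := key_mem_zero N hNcover hNirr hN'
    refine ⟨Subgroup.mem_iInf.mpr fun i => ?_, Subgroup.mem_iInf.mpr fun j => ?_⟩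
    · rcases eq_or_ne i 0 with h | h
      · exact h ▸ hM0'
      · exact hM' i h
    · rcases eq_or_ne j 0 with h | h
      · exact h ▸ hN0'
      · exact hN' j h
  · intro g hg
    rw [Subgroup.mem_sInf]
    intro S hS
    rcases hS with rfl | ⟨i, _, rfl⟩ | ⟨j, _, rfl⟩
    · apply Subgroup.mem_sup_left
      exact ⟨Subgroup.mem_iInf.mp hg.1 0, Subgroup.mem_iInf.mp hg.2 0⟩
    · exact ⟨Subgroup.mem_iInf.mp hg.1 i, trivial⟩
    · exact ⟨trivial, Subgroup.mem_iInf.mp hg.2 j⟩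
end

section
/- Let G be a group and S = {M_1,…,M_m} an irredundant cover of G by proper subgroups such that M_1 is an irredundant member (i.e., the remaining subgroups do not cover G). Then M_1 is not contained in the union of the M_j for j ≠ 1, and moreover ⋂_{i=1}^m M_i = ⋂_{i=2}^m M_i, i.e., M_1 contains the intersection of the other members. -/
/-- An irredundant member M₁ of a cover is not contained in the union of the other
members, and contains the intersection of the other members. -/
theorem stmt7 {G : Type*} [Group G] {m : ℕ} (M : Fin (m + 1) → Subgroup G)
    (hproper : ∀ i, M i ≠ ⊤)
    (hcover : ∀ g : G, ∃ i, g ∈ M i)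
    (hirr0 : ¬ (∀ g : G, ∃ j, j ≠ 0 ∧ g ∈ M j)) :
    ¬ ((M 0 : Set G) ⊆ ⋃ j ∈ {j : Fin (m + 1) | j ≠ 0}, (M j : Set G)) ∧
    (⨅ i, M i) = ⨅ j ∈ {j : Fin (m + 1) | j ≠ 0}, M j := by
  push_neg at hirr0
  obtain ⟨g, hg⟩ := hirr0
  have hg0 : g ∈ M 0 := by
    obtain ⟨i, hi⟩ := hcover g
    rcases eq_or_ne i 0 with rfl | h
    · exact hi
    · exact absurd hi (hg i h)
  constructor
  · intro hsub
    have := hsub hg0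
    simp only [Set.mem_iUnion, Set.mem_setOf_eq, SetLike.mem_coe] at this
    obtain ⟨j, hj, hmem⟩ := this
    exact hg j hj hmem
  · apply le_antisymm
    · exact le_iInf fun j => le_iInf fun _ => iInf_le M j
    · apply le_iInf
      intro i
      rcases eq_or_ne i 0 with rfl | h
      · intro x hx
        simp only [Subgroup.mem_iInf] at hx
        -- g * x must lie in some M_j; if j ≠ 0 then g ∈ M j, contradiction
        obtain ⟨j, hj⟩ := hcover (g * x)
        rcases eq_or_ne j 0 with rfl | hne
        · have : g⁻¹ * (g * x) ∈ M 0 := mul_mem (inv_mem hg0) hj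
          simpa using this
        · exact absurd (by simpa using mul_mem hj (inv_mem (hx j hne))) (hg j hne)
      · exact le_trans (iInf_le _ i) (by simp [h])
end

section
/- Let V₁ and V₂ be finite-dimensional vector spaces over the finite field F_q. Suppose C₁ = {M₁,…,M_m} and C₂ = {N₁,…,N_n} are irredundant covers of the additive groups of V₁ and V₂ by proper subgroups, and let a ∈ V₁ \ M₁ and b ∈ V₂ \ N₁. Then C = {(M₁ × N₁) + ⟨(a,b)⟩, M_i × V₂ (i = 2,…,m), V₁ × N_j (j = 2,…,n)} is an irredundant (m+n−1)-cover of V₁ × V₂ whose intersection is (⋂ M_i) × (⋂ N_j). -/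
/-!
Say a family of subgroups has private points if each member contains a point lying in no other
member. A cover is irredundant exactly when it has private points, and then any point lying in
all members but one lies in that one too. If `v i` and `w j` are private points of the two covers,
then `(v i, w 0)`, `(v 0, w j)` and `(v 0, w 0)` are private points of the new family. The only
check that is not immediate is `(v i, w 0) ∉ S₀ = (M 0 × N 0) + ⟨(a, b)⟩` for `i ≠ 0`: every
nonzero vector has prime order `p = char F`, so `k • a ∈ M 0 ↔ p ∣ k ↔ k • b ∈ N 0`, whence
`(x, y) ∈ S₀` has `x ∈ M 0 ↔ y ∈ N 0`. Private points make the family injective (giving the count),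
irredundant and proper; the intersection is computed from the "all but one" property.
-/

open AddSubgroup

section PrivatePoints

variable {ι X S : Type*} [SetLike S X]

def HasPrivatePoints (f : ι → S) : Prop :=
  ∀ i, ∃ x, ∀ j, x ∈ f j ↔ j = i

theorem hasPrivatePoints_of_irredundant [Fintype ι] [DecidableEq ι] {f : ι → S}
    (hcov : ∀ x : X, ∃ i, x ∈ f i)
    (hirr : ∀ s : Finset ι, s ≠ Finset.univ → ¬ ∀ x : X, ∃ i ∈ s, x ∈ f i) :
    HasPrivatePoints f := by
  intro i
  have hs : Finset.univ.erase i ≠ Finset.univ := fun h =>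
    Finset.notMem_erase i _ (h ▸ Finset.mem_univ i)
  obtain ⟨x, hx⟩ : ∃ x : X, ∀ j ∈ Finset.univ.erase i, x ∉ f j := by
    simpa using hirr _ hs
  refine ⟨x, fun j => ⟨fun hj => ?_, ?_⟩⟩
  · by_contra hji
    exact hx j (Finset.mem_erase.mpr ⟨hji, Finset.mem_univ j⟩) hj
  · rintro rfl
    obtain ⟨k, hk⟩ := hcov x
    by_contra hxj
    exact hx k (Finset.mem_erase.mpr ⟨fun h => hxj (h ▸ hk), Finset.mem_univ k⟩) hk

namespace HasPrivatePoints

variable {f : ι → S}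

theorem injective (hf : HasPrivatePoints f) : Function.Injective f := by
  intro i j hij
  obtain ⟨x, hx⟩ := hf j
  exact (hx i).mp (hij ▸ (hx j).mpr rfl)

theorem not_covers_of_ssubset (hf : HasPrivatePoints f) {D : Set S} (hD : D ⊂ Set.range f) :
    ¬ ∀ x : X, ∃ T ∈ D, x ∈ T := by
  intro hcov
  obtain ⟨_, ⟨i, rfl⟩, hiD⟩ := Set.exists_of_ssubset hD
  obtain ⟨x, hx⟩ := hf i
  obtain ⟨T, hTD, hxT⟩ := hcov x
  obtain ⟨j, rfl⟩ := hD.subset hTD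
  exact hiD ((hx j).mp hxT ▸ hTD)

end HasPrivatePoints

theorem HasPrivatePoints.ne_top {G : Type*} [AddGroup G] {f : ι → AddSubgroup G}
    (hf : HasPrivatePoints f) {i j : ι} (hij : i ≠ j) : f i ≠ ⊤ := by
  obtain ⟨x, hx⟩ := hf j
  intro htop
  exact hij ((hx i).mp (htop ▸ mem_top x))

theorem HasPrivatePoints.forall_mem_iff_forall_ne_mem {G : Type*} [AddGroup G]
    {f : ι → AddSubgroup G} (hf : HasPrivatePoints f) (hcov : ∀ x : G, ∃ i, x ∈ f i) (i : ι)
    {x : G} : (∀ j, x ∈ f j) ↔ ∀ j, j ≠ i → x ∈ f j := by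
  refine ⟨fun hx j _ => hx j, fun hx j => ?_⟩
  obtain rfl | hji := eq_or_ne j i
  · obtain ⟨z, hz⟩ := hf j
    obtain ⟨k, hk⟩ := hcov (z + x)
    obtain rfl : k = j := by
      by_contra hkj
      exact hkj ((hz k).mp (((f k).add_mem_cancel_right (hx k hkj)).mp hk))
    exact ((f k).add_mem_cancel_left ((hz k).mpr rfl)).mp hk
  · exact hx j hji

end PrivatePoints

theorem AddSubgroup.zsmul_mem_iff_dvd {G : Type*} [AddCommGroup G] {p : ℕ} [Fact p.Prime]
    (hG : ∀ g : G, p • g = 0) {H : AddSubgroup G} {x : G} (hx : x ∉ H) (k : ℤ) :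
    k • x ∈ H ↔ (p : ℤ) ∣ k := by
  have hp : p • (x : G ⧸ H) = 0 := by
    rw [← QuotientAddGroup.mk_nsmul, hG, QuotientAddGroup.mk_zero]
  have hx' : (x : G ⧸ H) ≠ 0 := by rwa [ne_eq, QuotientAddGroup.eq_zero_iff]
  rw [← QuotientAddGroup.eq_zero_iff, QuotientAddGroup.mk_zsmul, ← addOrderOf_eq_prime hp hx',
    addOrderOf_dvd_iff_zsmul_eq_zero]

theorem ringChar_nsmul_eq_zero (R : Type*) {V : Type*} [Semiring R] [AddCommMonoid V] [Module R V]
    (v : V) : ringChar R • v = 0 := by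
  rw [← Nat.cast_smul_eq_nsmul R, ringChar.Nat.cast_ringChar, zero_smul]

section Prod

variable {G₁ G₂ : Type*} [AddCommGroup G₁] [AddCommGroup G₂]

theorem AddSubgroup.exists_of_mem_prod_sup_zmultiples {H₁ : AddSubgroup G₁} {H₂ : AddSubgroup G₂}
    {a x : G₁} {b y : G₂} (h : (x, y) ∈ H₁.prod H₂ ⊔ zmultiples (a, b)) :
    ∃ k : ℤ, x - k • a ∈ H₁ ∧ y - k • b ∈ H₂ := by
  obtain ⟨u, hu, _, ⟨k, rfl⟩, huk⟩ := mem_sup.mp h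
  obtain rfl : u = (x, y) - k • (a, b) := eq_sub_of_add_eq huk
  exact ⟨k, hu.1, hu.2⟩

theorem AddSubgroup.mem_iff_mem_of_mem_prod_sup_zmultiples {p : ℕ} [Fact p.Prime]
    (h₁ : ∀ g : G₁, p • g = 0) (h₂ : ∀ g : G₂, p • g = 0) {H₁ : AddSubgroup G₁}
    {H₂ : AddSubgroup G₂} {a x : G₁} {b y : G₂} (ha : a ∉ H₁) (hb : b ∉ H₂)
    (h : (x, y) ∈ H₁.prod H₂ ⊔ zmultiples (a, b)) : x ∈ H₁ ↔ y ∈ H₂ := by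
  obtain ⟨k, hx, hy⟩ := exists_of_mem_prod_sup_zmultiples h
  rw [← sub_add_cancel x (k • a), ← sub_add_cancel y (k • b), H₁.add_mem_cancel_left hx,
    H₂.add_mem_cancel_left hy, zsmul_mem_iff_dvd h₁ ha, zsmul_mem_iff_dvd h₂ hb]

end Prod

section ProdCover

variable {ι κ G₁ G₂ : Type*} [AddCommGroup G₁] [AddCommGroup G₂]
  (M : ι → AddSubgroup G₁) (N : κ → AddSubgroup G₂) (i₀ : ι) (j₀ : κ) (a : G₁) (b : G₂)

def prodCover : Option ({i // i ≠ i₀} ⊕ {j // j ≠ j₀}) → AddSubgroup (G₁ × G₂)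
  | none => (M i₀).prod (N j₀) ⊔ zmultiples (a, b)
  | some (.inl i) => (M i).prod ⊤
  | some (.inr j) => (⊤ : AddSubgroup G₁).prod (N j)

theorem range_prodCover : Set.range (prodCover M N i₀ j₀ a b) =
    insert ((M i₀).prod (N j₀) ⊔ zmultiples (a, b))
      ({S | ∃ i, i ≠ i₀ ∧ S = (M i).prod ⊤} ∪
        {S | ∃ j, j ≠ j₀ ∧ S = (⊤ : AddSubgroup G₁).prod (N j)}) := by
  ext S
  simp [prodCover, Option.exists, Sum.exists, eq_comm]

variable {M N i₀ j₀ a b}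

@[simp]
theorem mem_prodCover_inl {i : {i // i ≠ i₀}} {z : G₁ × G₂} :
    z ∈ prodCover M N i₀ j₀ a b (some (.inl i)) ↔ z.1 ∈ M i := by
  simp [prodCover, mem_prod]

@[simp]
theorem mem_prodCover_inr {j : {j // j ≠ j₀}} {z : G₁ × G₂} :
    z ∈ prodCover M N i₀ j₀ a b (some (.inr j)) ↔ z.2 ∈ N j := by
  simp [prodCover, mem_prod]

theorem prod_le_prodCover_none : (M i₀).prod (N j₀) ≤ prodCover M N i₀ j₀ a b none :=
  le_sup_left

theorem exists_mem_prodCover (hM : ∀ x, ∃ i, x ∈ M i) (hN : ∀ y, ∃ j, y ∈ N j) (z : G₁ × G₂) :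
    ∃ k, z ∈ prodCover M N i₀ j₀ a b k := by
  obtain ⟨i, hi⟩ := hM z.1
  obtain ⟨j, hj⟩ := hN z.2
  by_cases hii₀ : i = i₀
  · by_cases hjj₀ : j = j₀
    · subst hii₀ hjj₀
      exact ⟨none, prod_le_prodCover_none ⟨hi, hj⟩⟩
    · exact ⟨some (.inr ⟨j, hjj₀⟩), by simpa using hj⟩
  · exact ⟨some (.inl ⟨i, hii₀⟩), by simpa using hi⟩

theorem hasPrivatePoints_prodCover {p : ℕ} [Fact p.Prime]
    (h₁ : ∀ g : G₁, p • g = 0) (h₂ : ∀ g : G₂, p • g = 0)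
    (hM : HasPrivatePoints M) (hN : HasPrivatePoints N) (ha : a ∉ M i₀) (hb : b ∉ N j₀) :
    HasPrivatePoints (prodCover M N i₀ j₀ a b) := by
  choose v hv using hM
  choose w hw using hN
  have hS₀ : ∀ {x y}, (x, y) ∈ prodCover M N i₀ j₀ a b none → (x ∈ M i₀ ↔ y ∈ N j₀) :=
    mem_iff_mem_of_mem_prod_sup_zmultiples h₁ h₂ ha hb
  rintro (_ | ⟨⟨i, hi⟩⟩ | ⟨⟨j, hj⟩⟩)
  · refine ⟨(v i₀, w j₀), ?_⟩
    rintro (_ | ⟨⟨i, hi⟩⟩ | ⟨⟨j, hj⟩⟩)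
    · simpa using prod_le_prodCover_none ⟨(hv i₀ i₀).mpr rfl, (hw j₀ j₀).mpr rfl⟩
    · simpa [hv] using hi
    · simpa [hw] using hj
  · refine ⟨(v i, w j₀), ?_⟩
    rintro (_ | ⟨⟨i', hi'⟩⟩ | ⟨⟨j, hj⟩⟩)
    · refine iff_of_false (fun h => hi ?_) (by simp)
      exact ((hv i i₀).mp ((hS₀ h).mpr ((hw j₀ j₀).mpr rfl))).symm
    · simp [hv]
    · simpa [hw] using hj
  · refine ⟨(v i₀, w j), ?_⟩
    rintro (_ | ⟨⟨i, hi⟩⟩ | ⟨⟨j', hj'⟩⟩)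
    · refine iff_of_false (fun h => hj ?_) (by simp)
      exact ((hw j j₀).mp ((hS₀ h).mp ((hv i₀ i₀).mpr rfl))).symm
    · simpa [hv] using hi
    · simp [hw]

theorem prodCover_ne_top (hM : ∀ x, ∃ i, x ∈ M i) (ha : a ∉ M i₀)
    (hf : HasPrivatePoints (prodCover M N i₀ j₀ a b)) (k : Option ({i // i ≠ i₀} ⊕ {j // j ≠ j₀})) :
    prodCover M N i₀ j₀ a b k ≠ ⊤ := by
  cases k with
  | none =>
    obtain ⟨i, hi⟩ := hM a
    have hii₀ : i ≠ i₀ := by rintro rfl; exact ha hi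
    exact hf.ne_top (j := some (.inl ⟨i, hii₀⟩)) (by simp)
  | some k => exact hf.ne_top (j := none) (by simp)

theorem iInf_prodCover (hM : HasPrivatePoints M) (hMcov : ∀ x, ∃ i, x ∈ M i)
    (hN : HasPrivatePoints N) (hNcov : ∀ y, ∃ j, y ∈ N j) :
    ⨅ k, prodCover M N i₀ j₀ a b k = (⨅ i, M i).prod (⨅ j, N j) := by
  ext ⟨x, y⟩
  simp only [mem_iInf, mem_prod, Option.forall, Sum.forall, Subtype.forall, mem_prodCover_inl,
    mem_prodCover_inr]
  constructor
  · rintro ⟨-, hx, hy⟩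
    exact ⟨(hM.forall_mem_iff_forall_ne_mem hMcov i₀).mpr hx,
      (hN.forall_mem_iff_forall_ne_mem hNcov j₀).mpr hy⟩
  · rintro ⟨hx, hy⟩
    exact ⟨prod_le_prodCover_none ⟨hx i₀, hy j₀⟩, fun i _ => hx i, fun j _ => hy j⟩

end ProdCover

theorem stmt10_general {F V₁ V₂ : Type*} [Field F] [Fintype F]
    [AddCommGroup V₁] [Module F V₁] [AddCommGroup V₂] [Module F V₂] {m n : ℕ}
    (M : Fin (m + 1) → AddSubgroup V₁) (N : Fin (n + 1) → AddSubgroup V₂)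
    (hMcover : ∀ v : V₁, ∃ i, v ∈ M i) (hNcover : ∀ v : V₂, ∃ j, v ∈ N j)
    (hMirr : ∀ s : Finset (Fin (m + 1)), s ≠ Finset.univ → ¬ (∀ v : V₁, ∃ i ∈ s, v ∈ M i))
    (hNirr : ∀ s : Finset (Fin (n + 1)), s ≠ Finset.univ → ¬ (∀ v : V₂, ∃ j ∈ s, v ∈ N j))
    (a : V₁) (b : V₂) (ha : a ∉ M 0) (hb : b ∉ N 0)
    (C : Set (AddSubgroup (V₁ × V₂)))
    (hC : C = insert ((M 0).prod (N 0) ⊔ AddSubgroup.zmultiples ((a, b) : V₁ × V₂))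
      ({S | ∃ i, i ≠ 0 ∧ S = (M i).prod ⊤} ∪ {S | ∃ j, j ≠ 0 ∧ S = (⊤ : AddSubgroup V₁).prod (N j)})) :
    (∀ v : V₁ × V₂, ∃ S ∈ C, v ∈ S) ∧ (∀ S ∈ C, S ≠ ⊤) ∧
    C.ncard = m + n + 1 ∧
    (∀ D : Set (AddSubgroup (V₁ × V₂)), D ⊂ C → ¬ (∀ v : V₁ × V₂, ∃ S ∈ D, v ∈ S)) ∧
    sInf C = (⨅ i, M i).prod (⨅ j, N j) := by
  have : Fact (ringChar F).Prime := ⟨CharP.char_is_prime F _⟩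
  have hM := hasPrivatePoints_of_irredundant hMcover hMirr
  have hN := hasPrivatePoints_of_irredundant hNcover hNirr
  have hf := hasPrivatePoints_prodCover (ringChar_nsmul_eq_zero F) (ringChar_nsmul_eq_zero F)
    hM hN ha hb
  rw [hC, ← range_prodCover]
  refine ⟨fun z => ?_, ?_, ?_, fun D hD => hf.not_covers_of_ssubset hD, ?_⟩
  · obtain ⟨k, hk⟩ := exists_mem_prodCover hMcover hNcover z
    exact ⟨_, ⟨k, rfl⟩, hk⟩
  · rintro _ ⟨k, rfl⟩
    exact prodCover_ne_top hMcover ha hf k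
  · rw [Set.ncard_range_of_injective hf.injective]
    simp [Nat.card_eq_fintype_card, Fintype.card_subtype_compl]
  · rw [sInf_range, iInf_prodCover hM hMcover hN hNcover]

/-- Combining irredundant covers of the additive groups of two F_q-vector spaces into an
irredundant ((m+1)+(n+1)-1)-cover of their product, with the stated intersection. -/
theorem stmt10 {F V₁ V₂ : Type*} [Field F] [Fintype F]
    [AddCommGroup V₁] [Module F V₁] [AddCommGroup V₂] [Module F V₂]
    [FiniteDimensional F V₁] [FiniteDimensional F V₂] {m n : ℕ}
    (M : Fin (m + 1) → AddSubgroup V₁) (N : Fin (n + 1) → AddSubgroup V₂)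
    (hMinj : Function.Injective M) (hNinj : Function.Injective N)
    (hMproper : ∀ i, M i ≠ ⊤) (hNproper : ∀ j, N j ≠ ⊤)
    (hMcover : ∀ v : V₁, ∃ i, v ∈ M i) (hNcover : ∀ v : V₂, ∃ j, v ∈ N j)
    (hMirr : ∀ s : Finset (Fin (m + 1)), s ≠ Finset.univ → ¬ (∀ v : V₁, ∃ i ∈ s, v ∈ M i))
    (hNirr : ∀ s : Finset (Fin (n + 1)), s ≠ Finset.univ → ¬ (∀ v : V₂, ∃ j ∈ s, v ∈ N j))
    (a : V₁) (b : V₂) (ha : a ∉ M 0) (hb : b ∉ N 0)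
    (C : Set (AddSubgroup (V₁ × V₂)))
    (hC : C = insert ((M 0).prod (N 0) ⊔ AddSubgroup.zmultiples ((a, b) : V₁ × V₂))
      ({S | ∃ i, i ≠ 0 ∧ S = (M i).prod ⊤} ∪ {S | ∃ j, j ≠ 0 ∧ S = (⊤ : AddSubgroup V₁).prod (N j)})) :
    (∀ v : V₁ × V₂, ∃ S ∈ C, v ∈ S) ∧ (∀ S ∈ C, S ≠ ⊤) ∧
    C.ncard = m + n + 1 ∧
    (∀ D : Set (AddSubgroup (V₁ × V₂)), D ⊂ C → ¬ (∀ v : V₁ × V₂, ∃ S ∈ D, v ∈ S)) ∧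
    sInf C = (⨅ i, M i).prod (⨅ j, N j) :=
  stmt10_general (F := F) M N hMcover hNcover hMirr hNirr a b ha hb C hC
end

section
/- If PG(n₁,q) contains a minimal blocking set of size k₁ and PG(n₂,q) contains a minimal blocking set of size k₂, then PG(n₁+n₂+1,q) contains a minimal blocking set of size k₁+k₂−1. -/
/-!
Write `V = F^(n₁+1)`, `W = F^(n₂+1)`, so that `ℙ(V × W)` is `PG(n₁+n₂+1,q)` and contains
`ℙ V` and `ℙ W` as disjoint subspaces. From minimal blocking sets `B₁ ∋ b₁` and `B₂ ∋ b₂`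
take `(B₁ \ {b₁}) ∪ (B₂ \ {b₂})` together with one point `p` of the line `b₁b₂`.
A hyperplane `ker χ` of `V × W` meets `V` and `W` in hyperplanes or in everything, hence meets
`B₁` and `B₂`; if only in `b₁` and `b₂`, it contains the line `b₁b₂` and so `p`.
A set is a minimal blocking set iff it blocks and each of its points lies on a tangent
hyperplane; if `ker φ` is tangent to `B₁` at `a₁` and `ker ψ` to `B₂` at `a₂`, then
`ker (φ, ψ)` is tangent to the new set at `a₁` when `a₂ = b₂ ≠ a₁`, at `a₂` when
`a₁ = b₁ ≠ a₂`, and at `p` when `(a₁, a₂) = (b₁, b₂)`.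
-/

open Module

/-- A set of points of PG(n,q) is a blocking set if it meets every hyperplane. -/
def IsBlockingSet (F : Type*) [Field F] (n : ℕ)
    (B : Set (Projectivization F (Fin (n + 1) → F))) : Prop :=
  ∀ W : Submodule F (Fin (n + 1) → F), finrank F W = n →
    ∃ x ∈ B, x.submodule ≤ W

/-- PG(n,q) contains a minimal blocking set of size k. -/
def HasMinimalBlockingSet (F : Type*) [Field F] (n k : ℕ) : Prop :=
  ∃ B : Set (Projectivization F (Fin (n + 1) → F)),
    B.Finite ∧ B.ncard = k ∧ IsBlockingSet F n B ∧
    ∀ B' ⊂ B, ¬ IsBlockingSet F n B'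

open scoped LinearAlgebra.Projectivization

namespace Projectivization

variable {F V W U : Type*} [Field F] [AddCommGroup V] [Module F V] [AddCommGroup W] [Module F W]
  [AddCommGroup U] [Module F U]

theorem apply_rep_mk_eq_zero_iff (f : V →ₗ[F] U) {v : V} (hv : v ≠ 0) :
    f (mk F v hv).rep = 0 ↔ f v = 0 := by
  obtain ⟨a, ha⟩ := exists_smul_eq_mk_rep F v hv
  rw [← ha, Units.smul_def, map_smul, smul_eq_zero, or_iff_right a.ne_zero]

theorem apply_rep_map_eq_zero_iff (g : V →ₗ[F] W) (hg : Function.Injective g) (f : W →ₗ[F] U)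
    (x : ℙ F V) : f (map g hg x).rep = 0 ↔ f (g x.rep) = 0 := by
  conv_lhs => rw [← x.mk_rep, map_mk]
  exact apply_rep_mk_eq_zero_iff f _

theorem submodule_le_ker_iff (f : V →ₗ[F] U) (x : ℙ F V) :
    x.submodule ≤ LinearMap.ker f ↔ f x.rep = 0 := by
  rw [submodule_eq, Submodule.span_singleton_le_iff_mem, LinearMap.mem_ker]

/-- Hyperplanes of `ℙ F V` are encoded as kernels of nonzero linear forms. -/
def IsBlocking (B : Set (ℙ F V)) : Prop :=
  ∀ φ : Dual F V, φ ≠ 0 → ∃ x ∈ B, φ x.rep = 0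

/-- When `x ∉ B` this says that `ker φ` misses `B`. -/
def IsTangentAt (φ : Dual F V) (B : Set (ℙ F V)) (x : ℙ F V) : Prop :=
  φ ≠ 0 ∧ ∀ y ∈ B, φ y.rep = 0 ↔ y = x

variable {B : Set (ℙ F V)}

theorem isBlocking_iff_forall_hyperplane [FiniteDimensional F V] :
    IsBlocking B ↔
      ∀ S : Submodule F V, finrank F S + 1 = finrank F V → ∃ x ∈ B, x.submodule ≤ S := by
  refine ⟨fun hB S hS => ?_, fun hB φ hφ => ?_⟩
  · have hlt : S < ⊤ := Submodule.lt_top_of_finrank_lt_finrank (by omega)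
    obtain ⟨φ, hφ, hSφ⟩ := Submodule.exists_dual_map_eq_bot_of_lt_top hlt inferInstance
    have hSker : S = LinearMap.ker φ := Submodule.eq_of_le_of_finrank_eq
      (LinearMap.le_ker_iff_map.2 hSφ) (by have := Dual.finrank_ker_add_one_of_ne_zero hφ; omega)
    obtain ⟨x, hx, hφx⟩ := hB φ hφ
    exact ⟨x, hx, hSker ▸ (submodule_le_ker_iff φ x).2 hφx⟩
  · obtain ⟨x, hx, hxS⟩ := hB _ (Dual.finrank_ker_add_one_of_ne_zero hφ)
    exact ⟨x, hx, (submodule_le_ker_iff φ x).1 hxS⟩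

theorem IsBlocking.nonempty [Nontrivial V] (hB : IsBlocking B) : B.Nonempty := by
  obtain ⟨v, hv⟩ := exists_ne (0 : V)
  obtain ⟨φ, hφv⟩ := Projective.exists_dual_ne_zero F hv
  obtain ⟨x, hx, -⟩ := hB φ (by rintro rfl; exact hφv rfl)
  exact ⟨x, hx⟩

theorem IsBlocking.exists_apply_rep_eq_zero (hB : IsBlocking B) {b : ℙ F V} (hb : b ∈ B)
    (φ : Dual F V) : ∃ x ∈ B, φ x.rep = 0 := by
  by_cases hφ : φ = 0
  · exact ⟨b, hb, by rw [hφ, LinearMap.zero_apply]⟩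
  · exact hB φ hφ

theorem minimal_isBlocking_iff :
    Minimal IsBlocking B ↔ IsBlocking B ∧ ∀ x ∈ B, ∃ φ, IsTangentAt φ B x := by
  refine ⟨fun hmin => ⟨hmin.prop, fun x hx => ?_⟩, fun ⟨hB, htan⟩ => ?_⟩
  · have hnot : ¬ IsBlocking (B \ {x}) :=
      hmin.not_prop_of_ssubset (Set.sdiff_singleton_ssubset.2 hx)
    simp only [IsBlocking, not_forall, exists_prop] at hnot
    obtain ⟨φ, hφ, hφB⟩ := hnot
    obtain ⟨y, hy, hφy⟩ := hmin.prop φ hφ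
    have hunique : ∀ z ∈ B, φ z.rep = 0 → z = x := fun z hz hφz => by
      by_contra hzx
      exact hφB ⟨z, ⟨hz, hzx⟩, hφz⟩
    exact ⟨φ, hφ, fun z hz => ⟨hunique z hz, fun hzx => hzx ▸ hunique y hy hφy ▸ hφy⟩⟩
  · refine Set.minimal_iff_forall_ssubset.2 ⟨hB, fun B' hB' hB'block => ?_⟩
    obtain ⟨x, hxB, hxB'⟩ := Set.exists_of_ssubset hB'
    obtain ⟨φ, hφ, hφB⟩ := htan x hxB
    obtain ⟨y, hy, hφy⟩ := hB'block φ hφ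
    exact hxB' ((hφB y (hB'.subset hy)).1 hφy ▸ hy)

section LinearEquiv

variable (e : V ≃ₗ[F] W)

theorem IsBlocking.image_map (hB : IsBlocking B) :
    IsBlocking (map (e : V →ₗ[F] W) e.injective '' B) := by
  intro φ hφ
  have hφe : φ ∘ₗ (e : V →ₗ[F] W) ≠ 0 := fun h => hφ <| by
    ext w
    simpa using LinearMap.congr_fun h (e.symm w)
  obtain ⟨x, hx, hφx⟩ := hB _ hφe
  exact ⟨_, Set.mem_image_of_mem _ hx, (apply_rep_map_eq_zero_iff _ _ φ x).2 hφx⟩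

theorem IsTangentAt.image_map {φ : Dual F V} {x : ℙ F V} (hφ : IsTangentAt φ B x) :
    IsTangentAt (φ ∘ₗ (e.symm : W →ₗ[F] V)) (map (e : V →ₗ[F] W) e.injective '' B)
      (map (e : V →ₗ[F] W) e.injective x) := by
  refine ⟨fun h => hφ.1 ?_, ?_⟩
  · ext v
    simpa using LinearMap.congr_fun h (e v)
  · rintro _ ⟨y, hy, rfl⟩
    rw [apply_rep_map_eq_zero_iff, (map_injective _ e.injective).eq_iff]
    simpa using hφ.2 y hy

theorem minimal_isBlocking_image_map (hB : Minimal IsBlocking B) :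
    Minimal IsBlocking (map (e : V →ₗ[F] W) e.injective '' B) := by
  rw [minimal_isBlocking_iff] at hB ⊢
  refine ⟨hB.1.image_map e, ?_⟩
  rintro _ ⟨x, hx, rfl⟩
  obtain ⟨φ, hφ⟩ := hB.2 x hx
  exact ⟨_, hφ.image_map e⟩

end LinearEquiv

section Sum

open LinearMap

variable (W) in
def inlPoint : ℙ F V → ℙ F (V × W) := map (inl F V W) inl_injective

variable (V) in
def inrPoint : ℙ F W → ℙ F (V × W) := map (inr F V W) inr_injective

/-- A point of the line joining the copies of `b₁` and `b₂`; any other point of that line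
would do as well. -/
noncomputable def joinPoint (b₁ : ℙ F V) (b₂ : ℙ F W) : ℙ F (V × W) :=
  mk F (b₁.rep, b₂.rep) (by simp [b₁.rep_nonzero])

@[simp]
theorem apply_rep_inlPoint_eq_zero_iff (f : V × W →ₗ[F] U) (x : ℙ F V) :
    f (inlPoint W x).rep = 0 ↔ f (x.rep, 0) = 0 :=
  apply_rep_map_eq_zero_iff _ _ f x

@[simp]
theorem apply_rep_inrPoint_eq_zero_iff (f : V × W →ₗ[F] U) (x : ℙ F W) :
    f (inrPoint V x).rep = 0 ↔ f (0, x.rep) = 0 :=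
  apply_rep_map_eq_zero_iff _ _ f x

@[simp]
theorem apply_rep_joinPoint_eq_zero_iff (f : V × W →ₗ[F] U) (b₁ : ℙ F V) (b₂ : ℙ F W) :
    f (joinPoint b₁ b₂).rep = 0 ↔ f (b₁.rep, b₂.rep) = 0 :=
  apply_rep_mk_eq_zero_iff f _

theorem inlPoint_injective : Function.Injective (inlPoint (F := F) (V := V) W) :=
  map_injective _ _

theorem inrPoint_injective : Function.Injective (inrPoint (F := F) (W := W) V) :=
  map_injective _ _

theorem inlPoint_ne_inrPoint (x : ℙ F V) (y : ℙ F W) : inlPoint W x ≠ inrPoint V y := by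
  intro h
  have := (apply_rep_inlPoint_eq_zero_iff (snd F V W) x).2 rfl
  rw [h, apply_rep_inrPoint_eq_zero_iff] at this
  exact y.rep_nonzero this

theorem joinPoint_ne_inlPoint (b₁ x : ℙ F V) (b₂ : ℙ F W) : joinPoint b₁ b₂ ≠ inlPoint W x := by
  intro h
  have := (apply_rep_inlPoint_eq_zero_iff (snd F V W) x).2 rfl
  rw [← h, apply_rep_joinPoint_eq_zero_iff] at this
  exact b₂.rep_nonzero this

theorem joinPoint_ne_inrPoint (b₁ : ℙ F V) (b₂ y : ℙ F W) : joinPoint b₁ b₂ ≠ inrPoint V y := by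
  intro h
  have := (apply_rep_inrPoint_eq_zero_iff (fst F V W) y).2 rfl
  rw [← h, apply_rep_joinPoint_eq_zero_iff] at this
  exact b₁.rep_nonzero this

def blockingSum (B₁ : Set (ℙ F V)) (B₂ : Set (ℙ F W)) (b₁ : ℙ F V) (b₂ : ℙ F W) :
    Set (ℙ F (V × W)) :=
  insert (joinPoint b₁ b₂) (inlPoint W '' (B₁ \ {b₁}) ∪ inrPoint V '' (B₂ \ {b₂}))

variable {B₁ : Set (ℙ F V)} {B₂ : Set (ℙ F W)} {b₁ : ℙ F V} {b₂ : ℙ F W}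

theorem finite_blockingSum (h₁ : B₁.Finite) (h₂ : B₂.Finite) :
    (blockingSum B₁ B₂ b₁ b₂).Finite :=
  ((h₁.sdiff.image _).union (h₂.sdiff.image _)).insert _

theorem ncard_blockingSum (h₁ : B₁.Finite) (h₂ : B₂.Finite) (hb₁ : b₁ ∈ B₁) (hb₂ : b₂ ∈ B₂) :
    (blockingSum B₁ B₂ b₁ b₂).ncard = B₁.ncard + B₂.ncard - 1 := by
  have hjoin : joinPoint b₁ b₂ ∉ inlPoint W '' (B₁ \ {b₁}) ∪ inrPoint V '' (B₂ \ {b₂}) := by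
    rintro (⟨x, -, hx⟩ | ⟨y, -, hy⟩)
    exacts [joinPoint_ne_inlPoint _ _ _ hx.symm, joinPoint_ne_inrPoint _ _ _ hy.symm]
  have hdisj : Disjoint (inlPoint W '' (B₁ \ {b₁})) (inrPoint V '' (B₂ \ {b₂})) :=
    Set.disjoint_left.2 fun _ ⟨x, _, hx⟩ ⟨y, _, hy⟩ => inlPoint_ne_inrPoint x y (hx.trans hy.symm)
  rw [blockingSum, Set.ncard_insert_of_notMem hjoin ((h₁.sdiff.image _).union (h₂.sdiff.image _)),
    Set.ncard_union_eq hdisj (h₁.sdiff.image _) (h₂.sdiff.image _),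
    Set.ncard_image_of_injective _ inlPoint_injective,
    Set.ncard_image_of_injective _ inrPoint_injective,
    ← Set.ncard_sdiff_singleton_add_one hb₁ h₁, ← Set.ncard_sdiff_singleton_add_one hb₂ h₂]
  omega

theorem IsBlocking.blockingSum (h₁ : IsBlocking B₁) (h₂ : IsBlocking B₂) (hb₁ : b₁ ∈ B₁)
    (hb₂ : b₂ ∈ B₂) : IsBlocking (blockingSum B₁ B₂ b₁ b₂) := by
  rintro χ -
  obtain ⟨a₁, ha₁, hχa₁⟩ := h₁.exists_apply_rep_eq_zero hb₁ (χ ∘ₗ inl F V W)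
  obtain ⟨a₂, ha₂, hχa₂⟩ := h₂.exists_apply_rep_eq_zero hb₂ (χ ∘ₗ inr F V W)
  by_cases hab₁ : a₁ = b₁
  · by_cases hab₂ : a₂ = b₂
    · subst hab₁ hab₂
      refine ⟨joinPoint a₁ a₂, Set.mem_insert _ _, ?_⟩
      have hsplit : ((a₁.rep, a₂.rep) : V × W) = (a₁.rep, 0) + (0, a₂.rep) := by simp
      simp only [comp_apply, inl_apply, inr_apply] at hχa₁ hχa₂
      rw [apply_rep_joinPoint_eq_zero_iff, hsplit, map_add, hχa₁, hχa₂, add_zero]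
    · exact ⟨inrPoint V a₂, Or.inr (Or.inr ⟨a₂, ⟨ha₂, hab₂⟩, rfl⟩), by simpa using hχa₂⟩
  · exact ⟨inlPoint W a₁, Or.inr (Or.inl ⟨a₁, ⟨ha₁, hab₁⟩, rfl⟩), by simpa using hχa₁⟩

theorem _root_.LinearMap.coprod_ne_zero_of_left {f : V →ₗ[F] U} (hf : f ≠ 0) (g : W →ₗ[F] U) :
    coprod f g ≠ 0 :=
  fun h => hf (by rw [← coprod_inl f g, h, zero_comp])

variable {φ : Dual F V} {ψ : Dual F W}

theorem IsTangentAt.inlPoint_blockingSum {a : ℙ F V} (hφ : IsTangentAt φ B₁ a)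
    (hψ : IsTangentAt ψ B₂ b₂) (hb₁ : b₁ ∈ B₁) (hb₂ : b₂ ∈ B₂) (hab : a ≠ b₁) :
    IsTangentAt (coprod φ ψ) (blockingSum B₁ B₂ b₁ b₂) (inlPoint W a) := by
  refine ⟨coprod_ne_zero_of_left hφ.1 ψ, ?_⟩
  rintro _ (rfl | ⟨c, ⟨hc, -⟩, rfl⟩ | ⟨c, ⟨hc, hcb : c ≠ b₂⟩, rfl⟩) <;>
    simp only [apply_rep_joinPoint_eq_zero_iff, apply_rep_inlPoint_eq_zero_iff,
      apply_rep_inrPoint_eq_zero_iff]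
  · simp [(hψ.2 b₂ hb₂).2 rfl, hφ.2 b₁ hb₁, hab.symm, joinPoint_ne_inlPoint]
  · simp [hφ.2 c hc, inlPoint_injective.eq_iff]
  · simp [hψ.2 c hc, hcb, (inlPoint_ne_inrPoint _ _).symm]

theorem IsTangentAt.inrPoint_blockingSum {a : ℙ F W} (hφ : IsTangentAt φ B₁ b₁)
    (hψ : IsTangentAt ψ B₂ a) (hb₁ : b₁ ∈ B₁) (hb₂ : b₂ ∈ B₂) (hab : a ≠ b₂) :
    IsTangentAt (coprod φ ψ) (blockingSum B₁ B₂ b₁ b₂) (inrPoint V a) := by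
  refine ⟨coprod_ne_zero_of_left hφ.1 ψ, ?_⟩
  rintro _ (rfl | ⟨c, ⟨hc, hcb : c ≠ b₁⟩, rfl⟩ | ⟨c, ⟨hc, -⟩, rfl⟩) <;>
    simp only [apply_rep_joinPoint_eq_zero_iff, apply_rep_inlPoint_eq_zero_iff,
      apply_rep_inrPoint_eq_zero_iff]
  · simp [(hφ.2 b₁ hb₁).2 rfl, hψ.2 b₂ hb₂, hab.symm, joinPoint_ne_inrPoint]
  · simp [hφ.2 c hc, hcb, inlPoint_ne_inrPoint]
  · simp [hψ.2 c hc, inrPoint_injective.eq_iff]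

theorem IsTangentAt.joinPoint_blockingSum (hφ : IsTangentAt φ B₁ b₁) (hψ : IsTangentAt ψ B₂ b₂)
    (hb₁ : b₁ ∈ B₁) (hb₂ : b₂ ∈ B₂) :
    IsTangentAt (coprod φ ψ) (blockingSum B₁ B₂ b₁ b₂) (joinPoint b₁ b₂) := by
  refine ⟨coprod_ne_zero_of_left hφ.1 ψ, ?_⟩
  rintro _ (rfl | ⟨c, ⟨hc, hcb : c ≠ b₁⟩, rfl⟩ | ⟨c, ⟨hc, hcb : c ≠ b₂⟩, rfl⟩) <;>
    simp only [apply_rep_joinPoint_eq_zero_iff, apply_rep_inlPoint_eq_zero_iff,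
      apply_rep_inrPoint_eq_zero_iff]
  · simp [(hφ.2 b₁ hb₁).2 rfl, (hψ.2 b₂ hb₂).2 rfl]
  · simp [hφ.2 c hc, hcb, (joinPoint_ne_inlPoint _ _ _).symm]
  · simp [hψ.2 c hc, hcb, (joinPoint_ne_inrPoint _ _ _).symm]

theorem minimal_isBlocking_blockingSum (h₁ : Minimal IsBlocking B₁) (h₂ : Minimal IsBlocking B₂)
    (hb₁ : b₁ ∈ B₁) (hb₂ : b₂ ∈ B₂) : Minimal IsBlocking (blockingSum B₁ B₂ b₁ b₂) := by
  rw [minimal_isBlocking_iff] at h₁ h₂ ⊢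
  refine ⟨h₁.1.blockingSum h₂.1 hb₁ hb₂, ?_⟩
  obtain ⟨φ, hφ⟩ := h₁.2 b₁ hb₁
  obtain ⟨ψ, hψ⟩ := h₂.2 b₂ hb₂
  rintro _ (rfl | ⟨a, ⟨ha, hab⟩, rfl⟩ | ⟨a, ⟨ha, hab⟩, rfl⟩)
  · exact ⟨_, hφ.joinPoint_blockingSum hψ hb₁ hb₂⟩
  · obtain ⟨φa, hφa⟩ := h₁.2 a ha
    exact ⟨_, hφa.inlPoint_blockingSum hψ hb₁ hb₂ hab⟩
  · obtain ⟨ψa, hψa⟩ := h₂.2 a ha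
    exact ⟨_, hφ.inrPoint_blockingSum hψa hb₁ hb₂ hab⟩

end Sum

variable (F V) in
def HasMinimalBlocking (k : ℕ) : Prop :=
  ∃ B : Set (ℙ F V), B.Finite ∧ B.ncard = k ∧ Minimal IsBlocking B

theorem HasMinimalBlocking.prod [Nontrivial V] [Nontrivial W] {k₁ k₂ : ℕ}
    (h₁ : HasMinimalBlocking F V k₁) (h₂ : HasMinimalBlocking F W k₂) :
    HasMinimalBlocking F (V × W) (k₁ + k₂ - 1) := by
  obtain ⟨B₁, hB₁, rfl, hmin₁⟩ := h₁
  obtain ⟨B₂, hB₂, rfl, hmin₂⟩ := h₂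
  obtain ⟨b₁, hb₁⟩ := hmin₁.prop.nonempty
  obtain ⟨b₂, hb₂⟩ := hmin₂.prop.nonempty
  exact ⟨blockingSum B₁ B₂ b₁ b₂, finite_blockingSum hB₁ hB₂, ncard_blockingSum hB₁ hB₂ hb₁ hb₂,
    minimal_isBlocking_blockingSum hmin₁ hmin₂ hb₁ hb₂⟩

theorem HasMinimalBlocking.of_linearEquiv {k : ℕ} (e : V ≃ₗ[F] W)
    (h : HasMinimalBlocking F V k) : HasMinimalBlocking F W k := by
  obtain ⟨B, hB, rfl, hmin⟩ := h
  exact ⟨_, hB.image _, Set.ncard_image_of_injective _ (map_injective _ e.injective),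
    minimal_isBlocking_image_map e hmin⟩

end Projectivization

open Projectivization in
theorem hasMinimalBlockingSet_iff (F : Type*) [Field F] (n k : ℕ) :
    HasMinimalBlockingSet F n k ↔ HasMinimalBlocking F (Fin (n + 1) → F) k := by
  have hblock (B : Set (ℙ F (Fin (n + 1) → F))) : IsBlockingSet F n B ↔ IsBlocking B := by
    simp only [IsBlockingSet, isBlocking_iff_forall_hyperplane, finrank_fin_fun, add_left_inj]
  simp only [HasMinimalBlockingSet, HasMinimalBlocking, Set.minimal_iff_forall_ssubset, hblock]

theorem stmt14_general (F : Type*) [Field F] (n₁ n₂ k₁ k₂ : ℕ)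
    (h₁ : HasMinimalBlockingSet F n₁ k₁) (h₂ : HasMinimalBlockingSet F n₂ k₂) :
    HasMinimalBlockingSet F (n₁ + n₂ + 1) (k₁ + k₂ - 1) := by
  rw [hasMinimalBlockingSet_iff] at h₁ h₂ ⊢
  exact (h₁.prod h₂).of_linearEquiv (LinearEquiv.ofFinrankEq _ _ (by simp; omega))

/-- If PG(n₁,q) and PG(n₂,q) contain minimal blocking sets of sizes k₁ and k₂, then
PG(n₁+n₂+1,q) contains a minimal blocking set of size k₁+k₂−1. -/
theorem stmt14 (F : Type*) [Field F] [Fintype F] (n₁ n₂ k₁ k₂ : ℕ)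
    (h₁ : HasMinimalBlockingSet F n₁ k₁) (h₂ : HasMinimalBlockingSet F n₂ k₂) :
    HasMinimalBlockingSet F (n₁ + n₂ + 1) (k₁ + k₂ - 1) :=
  stmt14_general F n₁ n₂ k₁ k₂ h₁ h₂
end

section
/- Let G₁, G₂ be groups and let C be the cover of G₁ × G₂ from Theorem 1, where additionally every M_i is a maximal subgroup of G₁ and every N_j is a maximal subgroup of G₂. Then every member of C is a maximal subgroup of G₁ × G₂; in particular C is a maximal irredundant (m+n−1)-cover. -/
open Pointwise

section Aux

variable {G₁ G₂ : Type*} [Group G₁] [Group G₂]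

/-- If `M` is a maximal subgroup of `G₁`, then `M × G₂` is maximal in `G₁ × G₂`. -/
lemma aux_coatom_prod_top {M : Subgroup G₁} (h : IsCoatom M) :
    IsCoatom (M.prod (⊤ : Subgroup G₂)) := by
  constructor
  · intro ht
    apply h.1
    refine top_unique fun x _ => ?_
    have hx : ((x, (1 : G₂)) : G₁ × G₂) ∈ M.prod (⊤ : Subgroup G₂) := by
      rw [ht]; trivial
    exact hx.1
  · intro H hH
    obtain ⟨⟨g, w⟩, hgH, hgM⟩ := SetLike.exists_of_lt hH
    have hgM' : g ∉ M := fun hg => hgM (Subgroup.mem_prod.mpr ⟨hg, trivial⟩)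
    have hmap : (H.map (MonoidHom.fst G₁ G₂)) = ⊤ := by
      apply h.2
      refine lt_of_le_of_ne (fun x hx => ⟨(x, 1), hH.le (Subgroup.mem_prod.mpr ⟨hx, trivial⟩), rfl⟩) ?_
      intro he
      exact hgM' (by rw [he]; exact ⟨(g, w), hgH, rfl⟩)
    refine top_unique fun ⟨u, v⟩ _ => ?_
    have hu : u ∈ H.map (MonoidHom.fst G₁ G₂) := by rw [hmap]; trivial
    obtain ⟨⟨u', w'⟩, hw, he⟩ := hu
    have heu : u' = u := he
    subst heu
    have h2 : ((1 : G₁), w'⁻¹ * v) ∈ H :=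
      hH.le (Subgroup.mem_prod.mpr ⟨M.one_mem, trivial⟩)
    have := H.mul_mem hw h2
    rwa [Prod.mk_mul_mk, mul_one, mul_inv_cancel_left] at this

/-- If `N` is a maximal subgroup of `G₂`, then `G₁ × N` is maximal in `G₁ × G₂`. -/
lemma aux_coatom_top_prod {N : Subgroup G₂} (h : IsCoatom N) :
    IsCoatom ((⊤ : Subgroup G₁).prod N) := by
  constructor
  · intro ht
    apply h.1
    refine top_unique fun x _ => ?_
    have hx : (((1 : G₁), x) : G₁ × G₂) ∈ (⊤ : Subgroup G₁).prod N := by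
      rw [ht]; trivial
    exact hx.2
  · intro H hH
    obtain ⟨⟨w, g⟩, hgH, hgM⟩ := SetLike.exists_of_lt hH
    have hgM' : g ∉ N := fun hg => hgM (Subgroup.mem_prod.mpr ⟨trivial, hg⟩)
    have hmap : (H.map (MonoidHom.snd G₁ G₂)) = ⊤ := by
      apply h.2
      refine lt_of_le_of_ne (fun x hx => ⟨(1, x), hH.le (Subgroup.mem_prod.mpr ⟨trivial, hx⟩), rfl⟩) ?_
      intro he
      exact hgM' (by rw [he]; exact ⟨(w, g), hgH, rfl⟩)
    refine top_unique fun ⟨u, v⟩ _ => ?_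
    have hv : v ∈ H.map (MonoidHom.snd G₁ G₂) := by rw [hmap]; trivial
    obtain ⟨⟨w', v'⟩, hw, he⟩ := hv
    have hev : v' = v := he
    subst hev
    have h2 : ((w'⁻¹ * u, (1 : G₂)) : G₁ × G₂) ∈ H :=
      hH.le (Subgroup.mem_prod.mpr ⟨trivial, N.one_mem⟩)
    have := H.mul_mem hw h2
    rwa [Prod.mk_mul_mk, mul_one, mul_inv_cancel_left] at this

end Aux

/-- If all the M_i and N_j are maximal subgroups, every member of C is maximal;
in particular C is a maximal irredundant ((m+1)+(n+1)-1)-cover of G₁ × G₂. -/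
theorem stmt15 {G₁ G₂ : Type*} [Group G₁] [Group G₂] {m n : ℕ}
    (M : Fin (m + 1) → Subgroup G₁) (N : Fin (n + 1) → Subgroup G₂)
    (hMproper : ∀ i, M i ≠ ⊤) (hNproper : ∀ j, N j ≠ ⊤)
    (hMcover : ∀ g : G₁, ∃ i, g ∈ M i) (hNcover : ∀ g : G₂, ∃ j, g ∈ N j)
    (hMirr : ∀ s : Finset (Fin (m + 1)), s ≠ Finset.univ → ¬ (∀ g : G₁, ∃ i ∈ s, g ∈ M i))
    (hNirr : ∀ s : Finset (Fin (n + 1)), s ≠ Finset.univ → ¬ (∀ g : G₂, ∃ j ∈ s, g ∈ N j))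
    [hM0 : (M 0).Normal] [hN0 : (N 0).Normal]
    (p : ℕ) (hp : p.Prime) (a : G₁) (b : G₂) (ha : a ∉ M 0) (hb : b ∉ N 0)
    (horda : orderOf (QuotientGroup.mk a : G₁ ⧸ M 0) = p)
    (hordb : orderOf (QuotientGroup.mk b : G₂ ⧸ N 0) = p)
    (C : Set (Subgroup (G₁ × G₂)))
    (hC : C = insert ((M 0).prod (N 0) ⊔ Subgroup.zpowers (a, b))
      ({S | ∃ i, i ≠ 0 ∧ S = (M i).prod ⊤} ∪ {S | ∃ j, j ≠ 0 ∧ S = (⊤ : Subgroup G₁).prod (N j)}))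
    (hMmax : ∀ i, IsCoatom (M i)) (hNmax : ∀ j, IsCoatom (N j))
    (hMinj : Function.Injective M) (hNinj : Function.Injective N) :
    (∀ S ∈ C, IsCoatom S) ∧ C.ncard = m + n + 1 ∧
    (∀ g : G₁ × G₂, ∃ S ∈ C, g ∈ S) ∧
    (∀ D : Set (Subgroup (G₁ × G₂)), D ⊂ C → ¬ (∀ g : G₁ × G₂, ∃ S ∈ D, g ∈ S)) := by
  set K : Subgroup (G₁ × G₂) := (M 0).prod (N 0) ⊔ Subgroup.zpowers (a, b) with hKdef
  -- zpow on products is componentwise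
  have hpow : ∀ k : ℤ, ((a, b) : G₁ × G₂) ^ k = (a ^ k, b ^ k) := fun _ => rfl
  -- membership criterion for K
  have memK : ∀ (g : G₁) (h : G₂),
      ((g, h) : G₁ × G₂) ∈ K ↔ ∃ k : ℤ, g * a ^ (-k) ∈ M 0 ∧ h * b ^ (-k) ∈ N 0 := by
    intro g h
    constructor
    · intro hgh
      have hseteq := Subgroup.normal_mul ((M 0).prod (N 0)) (Subgroup.zpowers ((a, b) : G₁ × G₂))
      have hset : ((g, h) : G₁ × G₂) ∈
          (((M 0).prod (N 0) : Set (G₁ × G₂)) * (Subgroup.zpowers ((a, b) : G₁ × G₂) : Set (G₁ × G₂))) := by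
        rw [← hseteq]; exact hgh
      obtain ⟨x, hx, y, hy, hxy⟩ := hset
      obtain ⟨k, hk⟩ := Subgroup.mem_zpowers_iff.mp hy
      refine ⟨k, ?_, ?_⟩
      · have h1 : x.1 * a ^ k = g := by
          have := congrArg Prod.fst hxy
          rw [← hk, hpow] at this
          exact this
        rw [zpow_neg, ← h1, mul_inv_cancel_right]
        exact hx.1
      · have h2 : x.2 * b ^ k = h := by
          have := congrArg Prod.snd hxy
          rw [← hk, hpow] at this
          exact this
        rw [zpow_neg, ← h2, mul_inv_cancel_right]
        exact hx.2
    · rintro ⟨k, h1, h2⟩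
      have hx : ((g * a ^ (-k), h * b ^ (-k)) : G₁ × G₂) ∈ K :=
        Subgroup.mem_sup_left (Subgroup.mem_prod.mpr ⟨h1, h2⟩)
      have hy : ((a, b) : G₁ × G₂) ^ k ∈ K :=
        Subgroup.mem_sup_right (Subgroup.zpow_mem _ (Subgroup.mem_zpowers _) k)
      have := K.mul_mem hx hy
      rwa [hpow, Prod.mk_mul_mk, zpow_neg, zpow_neg, inv_mul_cancel_right,
        inv_mul_cancel_right] at this
  -- powers of a in M 0
  have haM : ∀ k : ℤ, a ^ k ∈ M 0 ↔ (p : ℤ) ∣ k := by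
    intro k
    rw [← QuotientGroup.eq_one_iff, QuotientGroup.mk_zpow, ← orderOf_dvd_iff_zpow_eq_one, horda]
  have hbN : ∀ k : ℤ, b ^ k ∈ N 0 ↔ (p : ℤ) ∣ k := by
    intro k
    rw [← QuotientGroup.eq_one_iff, QuotientGroup.mk_zpow, ← orderOf_dvd_iff_zpow_eq_one, hordb]
  -- quotient by M 0 is generated by a, and similarly for b
  have hgen : ∀ g : G₁, ∃ k : ℤ, g * a ^ (-k) ∈ M 0 := by
    have hsup : M 0 ⊔ Subgroup.zpowers a = ⊤ := by
      refine (hMmax 0).2 _ (lt_of_le_of_ne le_sup_left ?_)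
      intro he
      exact ha (by rw [he]; exact Subgroup.mem_sup_right (Subgroup.mem_zpowers a))
    intro g
    have hseteq := Subgroup.normal_mul (M 0) (Subgroup.zpowers a)
    have hset : g ∈ (((M 0) : Set G₁) * ((Subgroup.zpowers a) : Set G₁)) := by
      rw [← hseteq, hsup]; trivial
    obtain ⟨x, hx, y, ⟨k, hk⟩, hxy⟩ := hset
    refine ⟨k, ?_⟩
    rw [zpow_neg, ← hxy, ← hk, mul_inv_cancel_right]
    exact hx
  have hgen' : ∀ h : G₂, ∃ k : ℤ, h * b ^ (-k) ∈ N 0 := by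
    have hsup : N 0 ⊔ Subgroup.zpowers b = ⊤ := by
      refine (hNmax 0).2 _ (lt_of_le_of_ne le_sup_left ?_)
      intro he
      exact hb (by rw [he]; exact Subgroup.mem_sup_right (Subgroup.mem_zpowers b))
    intro h
    have hseteq := Subgroup.normal_mul (N 0) (Subgroup.zpowers b)
    have hset : h ∈ (((N 0) : Set G₂) * ((Subgroup.zpowers b) : Set G₂)) := by
      rw [← hseteq, hsup]; trivial
    obtain ⟨x, hx, y, ⟨k, hk⟩, hxy⟩ := hset
    refine ⟨k, ?_⟩
    rw [zpow_neg, ← hxy, ← hk, mul_inv_cancel_right]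
    exact hx
  -- membership in K with one coordinate in the base determines the other
  have hKmem : ∀ (g : G₁) (h : G₂), h ∈ N 0 → ((g, h) : G₁ × G₂) ∈ K → g ∈ M 0 := by
    intro g h hh hgh
    obtain ⟨k, h1, h2⟩ := (memK g h).1 hgh
    have hb' : b ^ (-k) ∈ N 0 := by
      have := (N 0).mul_mem ((N 0).inv_mem hh) h2
      rwa [inv_mul_cancel_left] at this
    have ha' : a ^ (-k) ∈ M 0 := (haM (-k)).2 ((hbN (-k)).1 hb')
    have := (M 0).mul_mem h1 ((M 0).inv_mem ha')
    rwa [mul_inv_cancel_right] at this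
  have hKmem' : ∀ (g : G₁) (h : G₂), g ∈ M 0 → ((g, h) : G₁ × G₂) ∈ K → h ∈ N 0 := by
    intro g h hg hgh
    obtain ⟨k, h1, h2⟩ := (memK g h).1 hgh
    have ha' : a ^ (-k) ∈ M 0 := by
      have := (M 0).mul_mem ((M 0).inv_mem hg) h1
      rwa [inv_mul_cancel_left] at this
    have hb' : b ^ (-k) ∈ N 0 := (hbN (-k)).2 ((haM (-k)).1 ha')
    have := (N 0).mul_mem h2 ((N 0).inv_mem hb')
    rwa [mul_inv_cancel_right] at this
  -- elements outside the M i and N j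
  have hexM : ∀ i, ∃ u : G₁, u ∉ M i := by
    intro i
    by_contra hcon
    push_neg at hcon
    exact hMproper i (top_unique fun x _ => hcon x)
  have hexN : ∀ j, ∃ v : G₂, v ∉ N j := by
    intro j
    by_contra hcon
    push_neg at hcon
    exact hNproper j (top_unique fun x _ => hcon x)
  obtain ⟨u₀, hu₀⟩ := hexM 0
  obtain ⟨v₀, hv₀⟩ := hexN 0
  -- distinctness of cover members
  have hKne1 : ∀ i, K ≠ (M i).prod ⊤ := by
    intro i he
    apply hv₀
    refine hKmem' 1 v₀ (M 0).one_mem ?_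
    rw [he]
    exact Subgroup.mem_prod.mpr ⟨(M i).one_mem, trivial⟩
  have hKne2 : ∀ j, K ≠ (⊤ : Subgroup G₁).prod (N j) := by
    intro j he
    apply hu₀
    refine hKmem u₀ 1 (N 0).one_mem ?_
    rw [he]
    exact Subgroup.mem_prod.mpr ⟨trivial, (N j).one_mem⟩
  have hMN : ∀ i j, (M i).prod (⊤ : Subgroup G₂) ≠ (⊤ : Subgroup G₁).prod (N j) := by
    intro i j he
    obtain ⟨u, hu⟩ := hexM i
    apply hu
    have : ((u, (1 : G₂)) : G₁ × G₂) ∈ (M i).prod (⊤ : Subgroup G₂) := by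
      rw [he]
      exact Subgroup.mem_prod.mpr ⟨trivial, (N j).one_mem⟩
    exact this.1
  have hMprodinj : Function.Injective (fun i => (M i).prod (⊤ : Subgroup G₂)) := by
    intro i i' he0
    have he : (M i).prod (⊤ : Subgroup G₂) = (M i').prod (⊤ : Subgroup G₂) := he0
    apply hMinj
    ext x
    constructor
    · intro hx
      have : ((x, (1 : G₂)) : G₁ × G₂) ∈ (M i').prod (⊤ : Subgroup G₂) := by
        rw [← he]; exact Subgroup.mem_prod.mpr ⟨hx, trivial⟩
      exact this.1
    · intro hx
      have : ((x, (1 : G₂)) : G₁ × G₂) ∈ (M i).prod (⊤ : Subgroup G₂) := by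
        rw [he]; exact Subgroup.mem_prod.mpr ⟨hx, trivial⟩
      exact this.1
  have hNprodinj : Function.Injective (fun j => (⊤ : Subgroup G₁).prod (N j)) := by
    intro j j' he0
    have he : (⊤ : Subgroup G₁).prod (N j) = (⊤ : Subgroup G₁).prod (N j') := he0
    apply hNinj
    ext x
    constructor
    · intro hx
      have : (((1 : G₁), x) : G₁ × G₂) ∈ (⊤ : Subgroup G₁).prod (N j') := by
        rw [← he]; exact Subgroup.mem_prod.mpr ⟨trivial, hx⟩
      exact this.2
    · intro hx
      have : (((1 : G₁), x) : G₁ × G₂) ∈ (⊤ : Subgroup G₁).prod (N j) := by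
        rw [he]; exact Subgroup.mem_prod.mpr ⟨trivial, hx⟩
      exact this.2
  -- K is a maximal subgroup
  have hKcoatom : IsCoatom K := by
    constructor
    · intro he
      apply hu₀
      refine hKmem u₀ 1 (N 0).one_mem ?_
      rw [he]; trivial
    · intro H hH
      have hKH : K ≤ H := hH.le
      obtain ⟨⟨g, h⟩, hgH, hgK⟩ := SetLike.exists_of_lt hH
      obtain ⟨c, hc⟩ := hgen g
      obtain ⟨d, hd⟩ := hgen' h
      have hcd : ¬ (p : ℤ) ∣ (c - d) := by
        intro hdvd
        apply hgK
        refine (memK g h).2 ⟨d, ?_, hd⟩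
        have h1 : a ^ (c - d) ∈ M 0 := (haM _).2 hdvd
        have := (M 0).mul_mem hc h1
        rwa [mul_assoc, ← zpow_add, (by ring : -c + (c - d) = -d)] at this
      have habH : ((a, b) : G₁ × G₂) ∈ H :=
        hKH (Subgroup.mem_sup_right (Subgroup.mem_zpowers _))
      -- (a^c, b^d) ∈ H
      have hacH : ((a ^ c, b ^ d) : G₁ × G₂) ∈ H := by
        have hx : ((g * a ^ (-c), h * b ^ (-d)) : G₁ × G₂) ∈ H :=
          hKH (Subgroup.mem_sup_left (Subgroup.mem_prod.mpr ⟨hc, hd⟩))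
        have := H.mul_mem (H.inv_mem hx) hgH
        rwa [show ((g * a ^ (-c), h * b ^ (-d)) : G₁ × G₂)⁻¹ * (g, h) = (a ^ c, b ^ d) by
          rw [Prod.inv_mk, Prod.mk_mul_mk, mul_inv_rev, mul_inv_rev, zpow_neg, zpow_neg,
            inv_inv, inv_inv, mul_assoc, inv_mul_cancel, mul_one, mul_assoc,
            inv_mul_cancel, mul_one]] at this
      -- (1, b^(d-c)) ∈ H
      have h1b : (((1 : G₁), b ^ (d - c)) : G₁ × G₂) ∈ H := by
        have := H.mul_mem (H.inv_mem (H.zpow_mem habH c)) hacH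
        rwa [show (((a, b) : G₁ × G₂) ^ c)⁻¹ * (a ^ c, b ^ d) = ((1 : G₁), b ^ (d - c)) by
          rw [hpow, Prod.inv_mk, Prod.mk_mul_mk, inv_mul_cancel, ← zpow_neg, ← zpow_add,
            (by ring : -c + d = d - c)]] at this
      -- {1} × G₂ ⊆ H
      have hbgen : ∀ v : G₂, (((1 : G₁), v) : G₁ × G₂) ∈ H := by
        intro v
        obtain ⟨e, he⟩ := hgen' v
        -- find t with p ∣ (d - c) * t - e
        have hcd' : ¬ (p : ℤ) ∣ (d - c) := fun hdd => hcd (dvd_sub_comm.mp hdd)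
        have hcop : IsCoprime ((p : ℤ)) (d - c) :=
          (Prime.coprime_iff_not_dvd (Nat.prime_iff_prime_int.mp hp)).2 hcd'
        obtain ⟨x, y, hxy⟩ := hcop
        have ht : (p : ℤ) ∣ (d - c) * (y * e) - e := ⟨-(x * e), by linear_combination e * hxy⟩
        set t : ℤ := y * e with htdef
        have hw : v * b ^ (-((d - c) * t)) ∈ N 0 := by
          have h1 : b ^ (e - (d - c) * t) ∈ N 0 := by
            refine (hbN _).2 ?_
            have : (p : ℤ) ∣ -((d - c) * t - e) := Dvd.dvd.neg_right ht
            rwa [neg_sub] at this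
          have := (N 0).mul_mem he h1
          rwa [mul_assoc, ← zpow_add, (by ring : -e + (e - (d - c) * t) = -((d - c) * t))] at this
        have hbt : (((1 : G₁), b ^ ((d - c) * t)) : G₁ × G₂) ∈ H := by
          have := H.zpow_mem h1b t
          rwa [show (((1 : G₁), b ^ (d - c)) : G₁ × G₂) ^ t = ((1 : G₁), b ^ ((d - c) * t)) from
            show (((1 : G₁) ^ t, (b ^ (d - c)) ^ t) : G₁ × G₂) = _ by
              rw [one_zpow, ← zpow_mul]] at this
        have hwH : ((((1 : G₁), v * b ^ (-((d - c) * t)))) : G₁ × G₂) ∈ H :=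
          hKH (Subgroup.mem_sup_left (Subgroup.mem_prod.mpr ⟨(M 0).one_mem, hw⟩))
        have := H.mul_mem hwH hbt
        rwa [Prod.mk_mul_mk, one_mul, zpow_neg, inv_mul_cancel_right] at this
      -- G₁ × {1} ⊆ H
      have hagen : ∀ u : G₁, ((u, (1 : G₂)) : G₁ × G₂) ∈ H := by
        intro u
        obtain ⟨s, hs⟩ := hgen u
        have h1 : ((a ^ s, b ^ s) : G₁ × G₂) ∈ H := by
          have := H.zpow_mem habH s
          rwa [hpow] at this
        have h2 := H.mul_mem h1 (hbgen (b ^ (-s)))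
        rw [show ((a ^ s, b ^ s) : G₁ × G₂) * (1, b ^ (-s)) = (a ^ s, (1 : G₂)) by
          rw [Prod.mk_mul_mk, mul_one, zpow_neg, mul_inv_cancel]] at h2
        have h3 : ((u * a ^ (-s), (1 : G₂)) : G₁ × G₂) ∈ H :=
          hKH (Subgroup.mem_sup_left (Subgroup.mem_prod.mpr ⟨hs, (N 0).one_mem⟩))
        have := H.mul_mem h3 h2
        rwa [Prod.mk_mul_mk, one_mul, zpow_neg, inv_mul_cancel_right] at this
      refine top_unique fun ⟨u, v⟩ _ => ?_
      have := H.mul_mem (hagen u) (hbgen v)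
      rwa [Prod.mk_mul_mk, mul_one, one_mul] at this
  -- notation for the two families
  set A : Set (Subgroup (G₁ × G₂)) := {S | ∃ i, i ≠ 0 ∧ S = (M i).prod ⊤} with hAdef
  set B : Set (Subgroup (G₁ × G₂)) := {S | ∃ j, j ≠ 0 ∧ S = (⊤ : Subgroup G₁).prod (N j)} with hBdef
  have hAim : A = (fun i => (M i).prod (⊤ : Subgroup G₂)) '' {i | i ≠ 0} := by
    ext S
    constructor
    · rintro ⟨i, hi, rfl⟩; exact ⟨i, hi, rfl⟩
    · rintro ⟨i, hi, rfl⟩; exact ⟨i, hi, rfl⟩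
  have hBim : B = (fun j => (⊤ : Subgroup G₁).prod (N j)) '' {j | j ≠ 0} := by
    ext S
    constructor
    · rintro ⟨j, hj, rfl⟩; exact ⟨j, hj, rfl⟩
    · rintro ⟨j, hj, rfl⟩; exact ⟨j, hj, rfl⟩
  have hAfin : A.Finite := by rw [hAim]; exact (Set.toFinite _).image _
  have hBfin : B.Finite := by rw [hBim]; exact (Set.toFinite _).image _
  have hAcard : A.ncard = m := by
    rw [hAim, Set.ncard_image_of_injective _ hMprodinj]
    have he : {i : Fin (m + 1) | i ≠ 0} = ↑((Finset.univ : Finset (Fin (m + 1))).erase 0) := by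
      ext i; simp
    rw [he, Set.ncard_coe_finset, Finset.card_erase_of_mem (Finset.mem_univ _),
      Finset.card_univ, Fintype.card_fin]
    omega
  have hBcard : B.ncard = n := by
    rw [hBim, Set.ncard_image_of_injective _ hNprodinj]
    have he : {j : Fin (n + 1) | j ≠ 0} = ↑((Finset.univ : Finset (Fin (n + 1))).erase 0) := by
      ext j; simp
    rw [he, Set.ncard_coe_finset, Finset.card_erase_of_mem (Finset.mem_univ _),
      Finset.card_univ, Fintype.card_fin]
    omega
  have hAB : Disjoint A B := by
    rw [Set.disjoint_left]
    rintro S ⟨i, hi, rfl⟩ ⟨j, hj, hSj⟩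
    exact hMN i j hSj
  have hKnotAB : K ∉ A ∪ B := by
    rintro (⟨i, hi, hKi⟩ | ⟨j, hj, hKj⟩)
    · exact hKne1 i hKi
    · exact hKne2 j hKj
  refine ⟨?_, ?_, ?_, ?_⟩
  · -- every member is a coatom
    intro S hS
    rw [hC] at hS
    rcases hS with rfl | ⟨i, hi, rfl⟩ | ⟨j, hj, rfl⟩
    · exact hKcoatom
    · exact aux_coatom_prod_top (hMmax i)
    · exact aux_coatom_top_prod (hNmax j)
  · -- cardinality
    rw [hC]
    rw [Set.ncard_insert_of_notMem hKnotAB (hAfin.union hBfin),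
      Set.ncard_union_eq hAB hAfin hBfin, hAcard, hBcard]
  · -- cover
    rintro ⟨g, h⟩
    by_cases hg : ∃ i, i ≠ 0 ∧ g ∈ M i
    · obtain ⟨i, hi, hgi⟩ := hg
      exact ⟨(M i).prod ⊤, by rw [hC]; exact Set.mem_insert_iff.mpr (Or.inr (Or.inl ⟨i, hi, rfl⟩)),
        Subgroup.mem_prod.mpr ⟨hgi, trivial⟩⟩
    by_cases hh : ∃ j, j ≠ 0 ∧ h ∈ N j
    · obtain ⟨j, hj, hhj⟩ := hh
      exact ⟨(⊤ : Subgroup G₁).prod (N j),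
        by rw [hC]; exact Set.mem_insert_iff.mpr (Or.inr (Or.inr ⟨j, hj, rfl⟩)),
        Subgroup.mem_prod.mpr ⟨trivial, hhj⟩⟩
    push_neg at hg hh
    have hg0 : g ∈ M 0 := by
      obtain ⟨i, hi⟩ := hMcover g
      by_cases h0 : i = 0
      · rwa [h0] at hi
      · exact absurd hi (hg i h0)
    have hh0 : h ∈ N 0 := by
      obtain ⟨j, hj⟩ := hNcover h
      by_cases h0 : j = 0
      · rwa [h0] at hj
      · exact absurd hj (hh j h0)
    exact ⟨K, by rw [hC]; exact Set.mem_insert _ _,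
      Subgroup.mem_sup_left (Subgroup.mem_prod.mpr ⟨hg0, hh0⟩)⟩
  · -- irredundancy
    intro D hD hcov
    obtain ⟨S₀, hS₀C, hS₀D⟩ := Set.exists_of_ssubset hD
    have hDC : ∀ S ∈ D, S ∈ C := fun S hS => hD.subset hS
    -- helpers to extract "only" elements
    have honlyM : ∀ i₀ : Fin (m + 1), ∃ g : G₁, g ∈ M i₀ ∧ ∀ i, i ≠ i₀ → g ∉ M i := by
      intro i₀
      have hne : (Finset.univ : Finset (Fin (m + 1))).erase i₀ ≠ Finset.univ := by
        intro he
        have := Finset.mem_univ i₀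
        rw [← he] at this
        exact (Finset.notMem_erase i₀ _) this
      have := hMirr _ hne
      push_neg at this
      obtain ⟨g, hg⟩ := this
      have hg' : ∀ i, i ≠ i₀ → g ∉ M i := fun i hi =>
        hg i (Finset.mem_erase.mpr ⟨hi, Finset.mem_univ _⟩)
      obtain ⟨i, hi⟩ := hMcover g
      by_cases h0 : i = i₀
      · exact ⟨g, h0 ▸ hi, hg'⟩
      · exact absurd hi (hg' i h0)
    have honlyN : ∀ j₀ : Fin (n + 1), ∃ h : G₂, h ∈ N j₀ ∧ ∀ j, j ≠ j₀ → h ∉ N j := by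
      intro j₀
      have hne : (Finset.univ : Finset (Fin (n + 1))).erase j₀ ≠ Finset.univ := by
        intro he
        have := Finset.mem_univ j₀
        rw [← he] at this
        exact (Finset.notMem_erase j₀ _) this
      have := hNirr _ hne
      push_neg at this
      obtain ⟨h, hh⟩ := this
      have hh' : ∀ j, j ≠ j₀ → h ∉ N j := fun j hj =>
        hh j (Finset.mem_erase.mpr ⟨hj, Finset.mem_univ _⟩)
      obtain ⟨j, hj⟩ := hNcover h
      by_cases h0 : j = j₀
      · exact ⟨h, h0 ▸ hj, hh'⟩
      · exact absurd hj (hh' j h0)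
    rw [hC] at hS₀C
    rcases hS₀C with rfl | ⟨i₀, hi₀, rfl⟩ | ⟨j₀, hj₀, rfl⟩
    · -- D misses K
      obtain ⟨g, hg0, hg⟩ := honlyM 0
      obtain ⟨h, hh0, hh⟩ := honlyN 0
      obtain ⟨S, hSD, hgh⟩ := hcov (g, h)
      have hSC := hDC S hSD
      rw [hC] at hSC
      rcases hSC with rfl | ⟨i, hi, rfl⟩ | ⟨j, hj, rfl⟩
      · exact hS₀D hSD
      · exact hg i hi hgh.1
      · exact hh j hj hgh.2
    · -- D misses (M i₀).prod ⊤
      obtain ⟨g, hgi₀, hg⟩ := honlyM i₀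
      obtain ⟨h, hh0, hh⟩ := honlyN 0
      obtain ⟨S, hSD, hgh⟩ := hcov (g, h)
      have hSC := hDC S hSD
      rw [hC] at hSC
      rcases hSC with rfl | ⟨i, hi, rfl⟩ | ⟨j, hj, rfl⟩
      · exact hg 0 (Ne.symm hi₀) (hKmem g h hh0 hgh)
      · by_cases hii : i = i₀
        · subst hii; exact hS₀D hSD
        · exact hg i hii hgh.1
      · exact hh j hj hgh.2
    · -- D misses ⊤.prod (N j₀)
      obtain ⟨g, hg0, hg⟩ := honlyM 0
      obtain ⟨h, hhj₀, hh⟩ := honlyN j₀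
      obtain ⟨S, hSD, hgh⟩ := hcov (g, h)
      have hSC := hDC S hSD
      rw [hC] at hSC
      rcases hSC with rfl | ⟨i, hi, rfl⟩ | ⟨j, hj, rfl⟩
      · exact hh 0 (Ne.symm hj₀) (hKmem' g h hg0 hgh)
      · exact hg i hi hgh.1
      · by_cases hjj : j = j₀
        · subst hjj; exact hS₀D hSD
        · exact hh j hjj hgh.2
end

section
/- Let V₁, V₂ be finite-dimensional F_q-vector spaces admitting irredundant covers by m and n linear hyperplanes respectively. Then V₁ × V₂ admits an irredundant cover by m+n−1 linear hyperplanes. -/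
open Module

private lemma aux_exists_ker {F V : Type*} [Field F] [AddCommGroup V] [Module F V]
    [FiniteDimensional F V] (W : Submodule F V) (h : finrank F (V ⧸ W) = 1) :
    ∃ f : V →ₗ[F] F, LinearMap.ker f = W := by
  have h' : finrank F (V ⧸ W) = finrank F F := by rw [h, finrank_self]
  refine ⟨(LinearEquiv.ofFinrankEq _ _ h').toLinearMap ∘ₗ W.mkQ, ?_⟩
  rw [LinearMap.ker_comp, LinearEquiv.ker, Submodule.comap_bot, Submodule.ker_mkQ]

private lemma aux_finrank_ker {F V : Type*} [Field F] [AddCommGroup V] [Module F V]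
    (f : V →ₗ[F] F) (h : ∃ v, f v ≠ 0) : finrank F (V ⧸ LinearMap.ker f) = 1 := by
  obtain ⟨v, hv⟩ := h
  have hr : LinearMap.range f = ⊤ := LinearMap.range_eq_top.mpr (fun c =>
    ⟨(c * (f v)⁻¹) • v, by rw [map_smul, smul_eq_mul, mul_assoc, inv_mul_cancel₀ hv, mul_one]⟩)
  rw [f.quotKerEquivRange.finrank_eq, hr, finrank_top, finrank_self]

private def auxPhi {F V₁ V₂ : Type*} [Field F] [AddCommGroup V₁] [Module F V₁]
    [AddCommGroup V₂] [Module F V₂] {m n : ℕ}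
    (f : Fin (m + 1) → (V₁ →ₗ[F] F)) (g : Fin (n + 1) → (V₂ →ₗ[F] F)) :
    (Fin m ⊕ Fin n ⊕ Fin 1) → ((V₁ × V₂) →ₗ[F] F)
  | Sum.inl i => (f i.castSucc).comp (LinearMap.fst F V₁ V₂)
  | Sum.inr (Sum.inl j) => (g j.castSucc).comp (LinearMap.snd F V₁ V₂)
  | Sum.inr (Sum.inr _) => (f (Fin.last m)).comp (LinearMap.fst F V₁ V₂)
      - (g (Fin.last n)).comp (LinearMap.snd F V₁ V₂)

private lemma auxPhi_inl {F V₁ V₂ : Type*} [Field F] [AddCommGroup V₁] [Module F V₁]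
    [AddCommGroup V₂] [Module F V₂] {m n : ℕ}
    (f : Fin (m + 1) → (V₁ →ₗ[F] F)) (g : Fin (n + 1) → (V₂ →ₗ[F] F)) (i : Fin m)
    (v : V₁ × V₂) : auxPhi f g (Sum.inl i) v = f i.castSucc v.1 := rfl

private lemma auxPhi_inrl {F V₁ V₂ : Type*} [Field F] [AddCommGroup V₁] [Module F V₁]
    [AddCommGroup V₂] [Module F V₂] {m n : ℕ}
    (f : Fin (m + 1) → (V₁ →ₗ[F] F)) (g : Fin (n + 1) → (V₂ →ₗ[F] F)) (j : Fin n)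
    (v : V₁ × V₂) : auxPhi f g (Sum.inr (Sum.inl j)) v = g j.castSucc v.2 := rfl

private lemma auxPhi_inrr {F V₁ V₂ : Type*} [Field F] [AddCommGroup V₁] [Module F V₁]
    [AddCommGroup V₂] [Module F V₂] {m n : ℕ}
    (f : Fin (m + 1) → (V₁ →ₗ[F] F)) (g : Fin (n + 1) → (V₂ →ₗ[F] F)) (c : Fin 1)
    (v : V₁ × V₂) :
    auxPhi f g (Sum.inr (Sum.inr c)) v = f (Fin.last m) v.1 - g (Fin.last n) v.2 := rfl

/-- If V₁ and V₂ admit irredundant covers by m+1 and n+1 linear hyperplanes respectively,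
then V₁ × V₂ admits an irredundant cover by (m+1)+(n+1)-1 linear hyperplanes. -/
theorem stmt19 {F V₁ V₂ : Type*} [Field F] [Fintype F]
    [AddCommGroup V₁] [Module F V₁] [AddCommGroup V₂] [Module F V₂]
    [FiniteDimensional F V₁] [FiniteDimensional F V₂] {m n : ℕ}
    (W₁ : Fin (m + 1) → Submodule F V₁) (W₂ : Fin (n + 1) → Submodule F V₂)
    (hinj₁ : Function.Injective W₁) (hinj₂ : Function.Injective W₂)
    (hhyp₁ : ∀ i, finrank F (V₁ ⧸ W₁ i) = 1) (hhyp₂ : ∀ j, finrank F (V₂ ⧸ W₂ j) = 1)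
    (hcov₁ : ∀ v : V₁, ∃ i, v ∈ W₁ i) (hcov₂ : ∀ v : V₂, ∃ j, v ∈ W₂ j)
    (hirr₁ : ∀ s : Finset (Fin (m + 1)), s ≠ Finset.univ → ¬ (∀ v : V₁, ∃ i ∈ s, v ∈ W₁ i))
    (hirr₂ : ∀ s : Finset (Fin (n + 1)), s ≠ Finset.univ → ¬ (∀ v : V₂, ∃ j ∈ s, v ∈ W₂ j)) :
    ∃ U : Fin (m + n + 1) → Submodule F (V₁ × V₂),
      Function.Injective U ∧
      (∀ k, finrank F ((V₁ × V₂) ⧸ U k) = 1) ∧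
      (∀ v : V₁ × V₂, ∃ k, v ∈ U k) ∧
      (∀ s : Finset (Fin (m + n + 1)), s ≠ Finset.univ →
        ¬ (∀ v : V₁ × V₂, ∃ k ∈ s, v ∈ U k)) := by
  classical
  -- hyperplanes are proper
  have hne₁ : ∀ i, W₁ i ≠ ⊤ := by
    intro i hi
    have h1 := hhyp₁ i
    have : Subsingleton (V₁ ⧸ W₁ i) := Submodule.Quotient.subsingleton_iff.mpr hi
    rw [finrank_zero_of_subsingleton] at h1
    exact one_ne_zero h1.symm
  have hne₂ : ∀ j, W₂ j ≠ ⊤ := by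
    intro j hj
    have h1 := hhyp₂ j
    have : Subsingleton (V₂ ⧸ W₂ j) := Submodule.Quotient.subsingleton_iff.mpr hj
    rw [finrank_zero_of_subsingleton] at h1
    exact one_ne_zero h1.symm
  -- functionals
  choose f hf using fun i => aux_exists_ker (W₁ i) (hhyp₁ i)
  choose g hg using fun j => aux_exists_ker (W₂ j) (hhyp₂ j)
  have hmemf : ∀ i v, v ∈ W₁ i ↔ f i v = 0 := by
    intro i v; rw [← hf i, LinearMap.mem_ker]
  have hmemg : ∀ j v, v ∈ W₂ j ↔ g j v = 0 := by
    intro j v; rw [← hg j, LinearMap.mem_ker]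
  have hfne : ∀ i, ∃ v, f i v ≠ 0 := by
    intro i
    by_contra h
    push_neg at h
    exact hne₁ i (by rw [← hf i]; exact LinearMap.ker_eq_top.mpr (LinearMap.ext fun v => h v))
  have hgne : ∀ j, ∃ v, g j v ≠ 0 := by
    intro j
    by_contra h
    push_neg at h
    exact hne₂ j (by rw [← hg j]; exact LinearMap.ker_eq_top.mpr (LinearMap.ext fun v => h v))
  -- witnesses for irredundancy of original covers
  have key₁ : ∀ i, ∃ x, f i x = 0 ∧ ∀ i', i' ≠ i → f i' x ≠ 0 := by
    intro i
    have hs : (Finset.univ.erase i) ≠ (Finset.univ : Finset (Fin (m + 1))) := by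
      intro h
      have := Finset.mem_univ i
      rw [← h] at this
      exact Finset.notMem_erase i _ this
    have h := hirr₁ _ hs
    push_neg at h
    obtain ⟨v, hv⟩ := h
    obtain ⟨i'', hi''⟩ := hcov₁ v
    have hii : i'' = i := by
      by_contra hnee
      exact hv i'' (Finset.mem_erase.mpr ⟨hnee, Finset.mem_univ _⟩) hi''
    refine ⟨v, (hmemf i v).mp (hii ▸ hi''), fun i' hi' hcontra => ?_⟩
    exact hv i' (Finset.mem_erase.mpr ⟨hi', Finset.mem_univ _⟩) ((hmemf i' v).mpr hcontra)
  have key₂ : ∀ j, ∃ y, g j y = 0 ∧ ∀ j', j' ≠ j → g j' y ≠ 0 := by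
    intro j
    have hs : (Finset.univ.erase j) ≠ (Finset.univ : Finset (Fin (n + 1))) := by
      intro h
      have := Finset.mem_univ j
      rw [← h] at this
      exact Finset.notMem_erase j _ this
    have h := hirr₂ _ hs
    push_neg at h
    obtain ⟨v, hv⟩ := h
    obtain ⟨j'', hj''⟩ := hcov₂ v
    have hjj : j'' = j := by
      by_contra hnee
      exact hv j'' (Finset.mem_erase.mpr ⟨hnee, Finset.mem_univ _⟩) hj''
    refine ⟨v, (hmemg j v).mp (hjj ▸ hj''), fun j' hj' hcontra => ?_⟩
    exact hv j' (Finset.mem_erase.mpr ⟨hj', Finset.mem_univ _⟩) ((hmemg j' v).mpr hcontra)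
  choose x hx0 hx1 using key₁
  choose y hy0 hy1 using key₂
  have hmem : ∀ (a : Fin m ⊕ Fin n ⊕ Fin 1) (v : V₁ × V₂),
      v ∈ LinearMap.ker (auxPhi f g a) ↔ auxPhi f g a v = 0 := fun a v => LinearMap.mem_ker
  -- witnesses for the product cover
  have hw : ∀ a : Fin m ⊕ Fin n ⊕ Fin 1, ∃ w, w ∈ LinearMap.ker (auxPhi f g a) ∧
      ∀ b, b ≠ a → w ∉ LinearMap.ker (auxPhi f g b) := by
    rintro (i | j | c)
    · refine ⟨(x i.castSucc, y (Fin.last n)), (hmem _ _).mpr ?_, ?_⟩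
      · rw [auxPhi_inl]; exact hx0 i.castSucc
      · rintro (i' | j' | c) hb hmem'
        · rw [hmem, auxPhi_inl] at hmem'
          exact hx1 i.castSucc i'.castSucc
            (fun h => hb (by rw [Fin.castSucc_inj.mp h])) hmem'
        · rw [hmem, auxPhi_inrl] at hmem'
          exact hy1 (Fin.last n) j'.castSucc (Fin.castSucc_lt_last j').ne hmem'
        · rw [hmem, auxPhi_inrr] at hmem'
          simp only [hy0 (Fin.last n), sub_zero] at hmem'
          exact hx1 i.castSucc (Fin.last m) (Fin.castSucc_lt_last i).ne' hmem'
    · refine ⟨(x (Fin.last m), y j.castSucc), (hmem _ _).mpr ?_, ?_⟩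
      · rw [auxPhi_inrl]; exact hy0 j.castSucc
      · rintro (i' | j' | c) hb hmem'
        · rw [hmem, auxPhi_inl] at hmem'
          exact hx1 (Fin.last m) i'.castSucc (Fin.castSucc_lt_last i').ne hmem'
        · rw [hmem, auxPhi_inrl] at hmem'
          exact hy1 j.castSucc j'.castSucc
            (fun h => hb (by rw [Fin.castSucc_inj.mp h])) hmem'
        · rw [hmem, auxPhi_inrr] at hmem'
          simp only [hx0 (Fin.last m), zero_sub, neg_eq_zero] at hmem'
          exact hy1 j.castSucc (Fin.last n) (Fin.castSucc_lt_last j).ne' hmem'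
    · refine ⟨(x (Fin.last m), y (Fin.last n)), (hmem _ _).mpr ?_, ?_⟩
      · rw [auxPhi_inrr, hx0, hy0, sub_zero]
      · rintro (i' | j' | c') hb hmem'
        · rw [hmem, auxPhi_inl] at hmem'
          exact hx1 (Fin.last m) i'.castSucc (Fin.castSucc_lt_last i').ne hmem'
        · rw [hmem, auxPhi_inrl] at hmem'
          exact hy1 (Fin.last n) j'.castSucc (Fin.castSucc_lt_last j').ne hmem'
        · exact hb (by simp [Fin.eq_zero c, Fin.eq_zero c'])
  -- cover
  have hcov : ∀ v : V₁ × V₂, ∃ a, v ∈ LinearMap.ker (auxPhi f g a) := by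
    intro v
    obtain ⟨i, hi⟩ := hcov₁ v.1
    obtain ⟨j, hj⟩ := hcov₂ v.2
    rw [hmemf] at hi
    rw [hmemg] at hj
    by_cases him : i = Fin.last m
    · by_cases hjn : j = Fin.last n
      · exact ⟨Sum.inr (Sum.inr 0), (hmem _ _).mpr (by
          rw [auxPhi_inrr, ← him, ← hjn, hi, hj, sub_zero])⟩
      · obtain ⟨j', hj'⟩ := Fin.exists_castSucc_eq.mpr hjn
        exact ⟨Sum.inr (Sum.inl j'), (hmem _ _).mpr (by rw [auxPhi_inrl, hj', hj])⟩
    · obtain ⟨i', hi'⟩ := Fin.exists_castSucc_eq.mpr him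
      exact ⟨Sum.inl i', (hmem _ _).mpr (by rw [auxPhi_inl, hi', hi])⟩
  -- codimension one
  have hrank : ∀ a : Fin m ⊕ Fin n ⊕ Fin 1,
      finrank F ((V₁ × V₂) ⧸ LinearMap.ker (auxPhi f g a)) = 1 := by
    rintro (i | j | c)
    · apply aux_finrank_ker
      obtain ⟨v, hv⟩ := hfne i.castSucc
      exact ⟨(v, 0), by rw [auxPhi_inl]; exact hv⟩
    · apply aux_finrank_ker
      obtain ⟨v, hv⟩ := hgne j.castSucc
      exact ⟨(0, v), by rw [auxPhi_inrl]; exact hv⟩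
    · apply aux_finrank_ker
      obtain ⟨v, hv⟩ := hfne (Fin.last m)
      exact ⟨(v, 0), by rw [auxPhi_inrr]; simpa using hv⟩
  -- transport along an equivalence of index types
  let e : (Fin m ⊕ Fin n ⊕ Fin 1) ≃ Fin (m + n + 1) :=
    ((Equiv.sumCongr (Equiv.refl (Fin m)) finSumFinEquiv).trans finSumFinEquiv).trans
      (finCongr (by omega))
  refine ⟨fun k => LinearMap.ker (auxPhi f g (e.symm k)), ?_, fun k => hrank _, ?_, ?_⟩
  · intro k k' hkk
    by_contra hnee
    obtain ⟨w, hw1, hw2⟩ := hw (e.symm k)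
    have hkk' : LinearMap.ker (auxPhi f g (e.symm k)) = LinearMap.ker (auxPhi f g (e.symm k')) := hkk
    exact hw2 (e.symm k') (fun h => hnee (e.symm.injective h).symm) (hkk' ▸ hw1)
  · intro v
    obtain ⟨a, ha⟩ := hcov v
    exact ⟨e a, show v ∈ LinearMap.ker (auxPhi f g (e.symm (e a))) by
      rw [Equiv.symm_apply_apply]; exact ha⟩
  · intro s hs hall
    have hk0 : ∃ k, k ∉ s := by
      by_contra h
      push_neg at h
      exact hs (Finset.eq_univ_iff_forall.mpr h)
    obtain ⟨k₀, hk₀⟩ := hk0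
    obtain ⟨w, hw1, hw2⟩ := hw (e.symm k₀)
    obtain ⟨k, hk, hkw⟩ := hall w
    have hek : e.symm k = e.symm k₀ := by
      by_contra h
      exact hw2 _ h hkw
    exact hk₀ (e.symm.injective hek ▸ hk)
end
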